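/- arXiv:2004.05287 — 3 statements merged into one kernel-verified Lean document; each statement's English description precedes it below -/
import Mathlib

section
/- Let X be a discrete inverse category and X̃ its Cartesian completion. For each object X, the morphism [Δ_X] : X → X⊗X of X̃ represented by the pair (Δ_X;(coherence X⊗X → (X⊗X)⊗I), I) is counital, with counit the morphism ε_X : X → I of X̃ represented by the pair ((coherence X → I⊗X), X): that is, [Δ_X];(ε_X ⊗ id_X) = id_X = [Δ_X];(id_X ⊗ ε_X) in X̃. In particular the chosen semi-Frobenius structure of X induces a counital (special commutative) Frobenius structure on every object of X̃. -/
open CategoryTheory MonoidalCategory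

universe v u

/-- A restriction category: a category equipped with a restriction operator
sending `f : A ⟶ B` to `f̄ : A ⟶ A`, satisfying (R1)–(R4).
Composition `f ≫ g` is diagrammatic (`f` then `g`). -/
class RestrictionCategory (C : Type u) [Category.{v} C] where
  rst : ∀ {A B : C}, (A ⟶ B) → (A ⟶ A)
  rst_comp : ∀ {A B : C} (f : A ⟶ B), rst f ≫ f = f
  rst_comm : ∀ {A B B' : C} (f : A ⟶ B) (g : A ⟶ B'), rst f ≫ rst g = rst g ≫ rst f
  rst_rst : ∀ {A B B' : C} (f : A ⟶ B) (g : A ⟶ B'), rst (rst f ≫ g) = rst f ≫ rst g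
  comp_rst : ∀ {A B B' : C} (f : A ⟶ B) (g : B ⟶ B'), f ≫ rst g = rst (f ≫ g) ≫ f

/-- An inverse category: a restriction category in which every morphism is a
partial isomorphism; `pinv f` is the partial inverse `f°`. -/
class InverseCategory (C : Type u) [Category.{v} C] extends RestrictionCategory C where
  pinv : ∀ {A B : C}, (A ⟶ B) → (B ⟶ A)
  comp_pinv : ∀ {A B : C} (f : A ⟶ B), f ≫ pinv f = rst f
  pinv_comp : ∀ {A B : C} (f : A ⟶ B), pinv f ≫ f = rst (pinv f)

open RestrictionCategory InverseCategory

/-- The "middle-four" interchange map `(A⊗B)⊗(A'⊗B') ⟶ (A⊗A')⊗(B⊗B')`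
(i.e. `id ⊗ σ ⊗ id` with coherence made explicit). -/
def midSwap (C : Type u) [Category.{v} C] [MonoidalCategory C] [SymmetricCategory C]
    (A B A' B' : C) : (A ⊗ B) ⊗ (A' ⊗ B') ⟶ (A ⊗ A') ⊗ (B ⊗ B') :=
  (α_ A B (A' ⊗ B')).hom ≫
    (𝟙 A ⊗ₘ ((α_ B A' B').inv ≫ ((β_ B A').hom ⊗ₘ 𝟙 B') ≫ (α_ A' B B').hom)) ≫
      (α_ A A' (B ⊗ B')).inv

/-- A discrete inverse category: a symmetric monoidal inverse category whose
tensor preserves restriction in each argument, equipped with a chosen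
coassociative, cocommutative, natural comultiplication `Δ_X : X ⟶ X ⊗ X`
whose partial inverse `∇_X := (Δ_X)°` satisfies the (semi-)Frobenius and
specialness laws, compatibly with the tensor. -/
class DiscreteInverseCategory (C : Type u) [Category.{v} C] [MonoidalCategory C]
    [SymmetricCategory C] extends InverseCategory C where
  rst_tensor : ∀ {A B A' B' : C} (f : A ⟶ B) (g : A' ⟶ B'), rst (f ⊗ₘ g) = rst f ⊗ₘ rst g
  Δ : ∀ X : C, X ⟶ X ⊗ X
  Δ_coassoc : ∀ X : C, Δ X ≫ (Δ X ⊗ₘ 𝟙 X) ≫ (α_ X X X).hom = Δ X ≫ (𝟙 X ⊗ₘ Δ X)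
  Δ_cocomm : ∀ X : C, Δ X ≫ (β_ X X).hom = Δ X
  Δ_natural : ∀ {X Y : C} (f : X ⟶ Y), f ≫ Δ Y = Δ X ≫ (f ⊗ₘ f)
  frobenius : ∀ X : C,
    pinv (Δ X) ≫ Δ X = (𝟙 X ⊗ₘ Δ X) ≫ (α_ X X X).inv ≫ (pinv (Δ X) ⊗ₘ 𝟙 X)
  frobenius' : ∀ X : C,
    pinv (Δ X) ≫ Δ X = (Δ X ⊗ₘ 𝟙 X) ≫ (α_ X X X).hom ≫ (𝟙 X ⊗ₘ pinv (Δ X))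
  special : ∀ X : C, Δ X ≫ pinv (Δ X) = 𝟙 X
  Δ_tensor : ∀ X Y : C, Δ (X ⊗ Y) = (Δ X ⊗ₘ Δ Y) ≫ midSwap C X X Y Y
  Δ_unit : Δ (𝟙_ C) = (λ_ (𝟙_ C)).inv

open DiscreteInverseCategory

variable {C : Type u} [Category.{v} C] [MonoidalCategory C] [SymmetricCategory C]
  [DiscreteInverseCategory C]

/-- A representative of a morphism `X → Y` of the Cartesian completion `X̃`:
a pair `(S, f)` with `f : X ⟶ Y ⊗ S` ("a map with a history"). -/
def TildePair (X Y : C) : Type max u v := Σ S : C, X ⟶ Y ⊗ S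

/-- The defining relation of the Cartesian completion: `(f, S) ∼ (g, T)` iff
`f;(Δ_Y ⊗ id_S);(id_Y ⊗ f°);(id_Y ⊗ g);(∇_Y ⊗ id_T) = g`
(coherence isomorphisms made explicit). -/
def tildeRel {X Y : C} (p q : TildePair X Y) : Prop :=
  p.2 ≫ (Δ Y ⊗ₘ 𝟙 p.1) ≫ (α_ Y Y p.1).hom ≫ (𝟙 Y ⊗ₘ pinv p.2) ≫ (𝟙 Y ⊗ₘ q.2) ≫
      (α_ Y Y q.1).inv ≫ (pinv (Δ Y) ⊗ₘ 𝟙 q.1) = q.2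

/-- Hom-sets of the Cartesian completion `X̃`: equivalence classes of pairs. -/
def TildeHom (X Y : C) := Quot (tildeRel (X := X) (Y := Y))

/-- The class of a representative pair. -/
def tMk {X Y : C} (p : TildePair X Y) : TildeHom X Y := Quot.mk _ p

/-- The canonical functor `ι : X → X̃` on morphisms: `f ↦ [(f ; ρ⁻¹, I)]`. -/
def tOf {X Y : C} (f : X ⟶ Y) : TildeHom X Y := tMk ⟨𝟙_ C, f ≫ (ρ_ Y).inv⟩

/-- Composition of representatives in the Cartesian completion:
`(f, S);(g, T) := (f;(g ⊗ id_S);α, T ⊗ S)`. -/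
def pairComp {X Y Z : C} (p : TildePair X Y) (q : TildePair Y Z) : TildePair X Z :=
  ⟨q.1 ⊗ p.1, p.2 ≫ (q.2 ⊗ₘ 𝟙 p.1) ≫ (α_ Z q.1 p.1).hom⟩

/-- Tensor of representatives in the Cartesian completion:
`(f, S) ⊗ (g, T) := ((f ⊗ g);(id ⊗ σ ⊗ id), S ⊗ T)`. -/
def pairTensor {X X' Y Y' : C} (p : TildePair X Y) (q : TildePair X' Y') :
    TildePair (X ⊗ X') (Y ⊗ Y') :=
  ⟨p.1 ⊗ q.1, (p.2 ⊗ₘ q.2) ≫ midSwap C Y p.1 Y' q.1⟩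

/-!
Both composites reduce, by coherence alone, to a pair `(Δ_X ; (id ⊗ c), S)` whose history
`c : X ≅ S` is an isomorphic copy of the input; for the left counit the surviving copy is
the second one, so cocommutativity of `Δ_X` is used as well. Such a pair is equivalent to
the identity: its partial inverse is `(id ⊗ c⁻¹) ; ∇_X`, so `c` cancels in the defining
relation, which then collapses by coassociativity and specialness `Δ_X ; ∇_X = id`.
-/

section Restriction

variable {D : Type*} [Category D] [RestrictionCategory D]

lemma rst_id (A : D) : rst (𝟙 A) = 𝟙 A := by
  simpa using rst_comp (𝟙 A)

lemma rst_comp_rst_comp {A B B' : D} (f : A ⟶ B) (g : B ⟶ B') :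
    rst f ≫ rst (f ≫ g) = rst (f ≫ g) := by
  rw [← rst_rst, ← Category.assoc, rst_comp]

lemma rst_eq_id_of_isIso {A B : D} (f : A ⟶ B) [IsIso f] : rst f = 𝟙 A := by
  simpa [rst_id] using rst_comp_rst_comp f (inv f)

lemma rst_comp_isIso {A B B' : D} (f : A ⟶ B) (g : B ⟶ B') [IsIso g] :
    rst (f ≫ g) = rst f := by
  have h := comp_rst f g
  rw [rst_eq_id_of_isIso, Category.comp_id] at h
  calc rst (f ≫ g) = rst f ≫ rst (f ≫ g) := (rst_comp_rst_comp f g).symm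
    _ = rst f := by rw [rst_comm, ← rst_rst, ← h]

end Restriction

section Inverse

variable {D : Type*} [Category D] [InverseCategory D]

lemma eq_pinv_of_comp_eq_rst {A B : D} {f : A ⟶ B} {g : B ⟶ A}
    (hfg : f ≫ g = rst f) (hgf : g ≫ f = rst g) : g = pinv f := by
  set k := pinv f
  have hg : rst g ≫ k = g := by
    rw [← hgf, Category.assoc, comp_pinv, ← hfg, ← Category.assoc, hgf, rst_comp]
  calc g = rst g ≫ rst k ≫ k := by rw [rst_comp, hg]
    _ = rst k ≫ rst g ≫ k := by rw [← Category.assoc, rst_comm, Category.assoc]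
    _ = k := by
      rw [hg, ← pinv_comp, Category.assoc, hfg, ← comp_pinv, ← Category.assoc, pinv_comp,
        rst_comp]

lemma pinv_comp_isIso {A B B' : D} (f : A ⟶ B) (g : B ⟶ B') [IsIso g] :
    pinv (f ≫ g) = inv g ≫ pinv f := by
  refine (eq_pinv_of_comp_eq_rst ?_ ?_).symm
  · simp [comp_pinv, rst_comp_isIso]
  · rw [Category.assoc, ← Category.assoc (pinv f), pinv_comp, ← Category.assoc, comp_rst,
      Category.assoc, IsIso.inv_hom_id, Category.comp_id]

end Inverse

lemma comul_whiskerRight_assoc_pinv (X : C) :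
    Δ X ≫ Δ X ▷ X ≫ (α_ X X X).hom ≫ X ◁ pinv (Δ X) = Δ X := by
  have h := Δ_coassoc X
  simp only [tensorHom_id, id_tensorHom] at h
  rw [reassoc_of% h, ← whiskerLeft_comp, special, whiskerLeft_id, Category.comp_id]

lemma tMk_comul_whiskerLeft_isIso (X S : C) (c : X ⟶ S) [IsIso c] :
    tMk (⟨S, Δ X ≫ X ◁ c⟩ : TildePair X X) = tOf (𝟙 X) := by
  refine Quot.sound ?_
  have hpinv : pinv (Δ X ≫ X ◁ c) = X ◁ inv c ≫ pinv (Δ X) := by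
    rw [pinv_comp_isIso, inv_whiskerLeft]
  simp only [tildeRel, hpinv, tensorHom_id, id_tensorHom, Category.id_comp, Category.assoc]
  rw [whisker_exchange_assoc, associator_naturality_right_assoc, ← whiskerLeft_comp_assoc,
    ← whiskerLeft_comp_assoc X c, IsIso.hom_inv_id, whiskerLeft_id, Category.id_comp,
    reassoc_of% comul_whiskerRight_assoc_pinv X, whiskerLeft_rightUnitor_inv_assoc,
    Iso.hom_inv_id_assoc, ← rightUnitor_inv_naturality, reassoc_of% special]

lemma pairComp_comul_counit_tensor_id (X : C) :
    pairComp (⟨𝟙_ C, Δ X ≫ (ρ_ (X ⊗ X)).inv⟩ : TildePair X (X ⊗ X))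
        (pairComp
          (pairTensor (⟨X, (λ_ X).inv⟩ : TildePair X (𝟙_ C))
            (⟨𝟙_ C, (ρ_ X).inv⟩ : TildePair X X))
          (⟨𝟙_ C, (λ_ X).hom ≫ (ρ_ X).inv⟩ : TildePair (𝟙_ C ⊗ X) X)) =
      ⟨(𝟙_ C ⊗ X ⊗ 𝟙_ C) ⊗ 𝟙_ C,
        Δ X ≫ X ◁ ((ρ_ X).inv ≫ (λ_ _).inv ≫ (ρ_ _).inv)⟩ := by
  refine congrArg (Sigma.mk _) ?_
  conv_rhs => rw [← Δ_cocomm]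
  simp only [pairComp, pairTensor, midSwap, Category.assoc]
  congr 1
  monoidal

lemma pairComp_comul_id_tensor_counit (X : C) :
    pairComp (⟨𝟙_ C, Δ X ≫ (ρ_ (X ⊗ X)).inv⟩ : TildePair X (X ⊗ X))
        (pairComp
          (pairTensor (⟨𝟙_ C, (ρ_ X).inv⟩ : TildePair X X)
            (⟨X, (λ_ X).inv⟩ : TildePair X (𝟙_ C)))
          (⟨𝟙_ C, (ρ_ X).hom ≫ (ρ_ X).inv⟩ : TildePair (X ⊗ 𝟙_ C) X)) =
      ⟨(𝟙_ C ⊗ 𝟙_ C ⊗ X) ⊗ 𝟙_ C,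
        Δ X ≫ X ◁ ((λ_ X).inv ≫ (λ_ _).inv ≫ (ρ_ _).inv)⟩ := by
  refine congrArg (Sigma.mk _) ?_
  simp only [pairComp, pairTensor, midSwap, braiding_tensorUnit_left, Category.assoc]
  congr 1
  monoidal

/-- in the Cartesian completion `X̃` of a discrete inverse
category, the induced comultiplication `[Δ_X] = [(Δ_X ; ρ⁻¹, I)] : X → X ⊗ X`
is counital, with counit `ε_X = [(λ⁻¹ : X ⟶ I ⊗ X, X)] : X → I`:
`[Δ_X];(ε_X ⊗ id_X);ι(λ) = ι(id_X) = [Δ_X];(id_X ⊗ ε_X);ι(ρ)` in `X̃`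
(so the chosen semi-Frobenius structure becomes counital in `X̃`). -/
theorem tilde_counital (X : C) :
    tMk (pairComp (⟨𝟙_ C, Δ X ≫ (ρ_ (X ⊗ X)).inv⟩ : TildePair X (X ⊗ X))
        (pairComp
          (pairTensor (⟨X, (λ_ X).inv⟩ : TildePair X (𝟙_ C))
            (⟨𝟙_ C, (ρ_ X).inv⟩ : TildePair X X))
          (⟨𝟙_ C, (λ_ X).hom ≫ (ρ_ X).inv⟩ : TildePair (𝟙_ C ⊗ X) X))) =
      tOf (𝟙 X) ∧
    tMk (pairComp (⟨𝟙_ C, Δ X ≫ (ρ_ (X ⊗ X)).inv⟩ : TildePair X (X ⊗ X))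
        (pairComp
          (pairTensor (⟨𝟙_ C, (ρ_ X).inv⟩ : TildePair X X)
            (⟨X, (λ_ X).inv⟩ : TildePair X (𝟙_ C)))
          (⟨𝟙_ C, (ρ_ X).hom ≫ (ρ_ X).inv⟩ : TildePair (X ⊗ 𝟙_ C) X))) =
      tOf (𝟙 X) := by
  rw [pairComp_comul_counit_tensor_id, pairComp_comul_id_tensor_counit]
  exact ⟨tMk_comul_whiskerLeft_isIso X _ _, tMk_comul_whiskerLeft_isIso X _ _⟩
end

section
/- Let j : FPinj₂ → FPar₂ be the inclusion prop morphism and j° : FPinj₂ → FPar₂^op the identity-on-objects prop morphism sending a partial injection to its partial inverse (relational converse). Let P : FPar₂ → FSpan₂ send a partial function f : Fin(2^n) ⇀ Fin(2^m) with domain D to the class of the span Fin(2^n) ← D → Fin(2^m) whose left leg is the inclusion of D and whose right leg is the restriction of f, and let P° : FPar₂^op → FSpan₂ send f to the reversed span. Then P and P° are prop morphisms with j°;P° = j;P, and this square is a pushout in the category of props: for every prop Q and prop morphisms F : FPar₂^op → Q, G : FPar₂ → Q with j°;F = j;G, there is a unique prop morphism H : FSpan₂ → Q with P°;H = F and P;H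 = G. -/
universe u

/-- Diagrammatic composition of partial functions: `pcomp f g = f then g`. -/
def pcomp {X Y Z : Type u} (f : X →. Y) (g : Y →. Z) : X →. Z := fun x => (f x).bind g

/-- The identity partial function. -/
def pid (X : Type u) : X →. X := fun x => Part.some x

/-- A total function regarded as a partial function. -/
def pofFun {X Y : Type u} (f : X → Y) : X →. Y := fun x => Part.some (f x)

/-- The cartesian product (tensor) of two partial functions. -/
def ptensor {X Y X' Y' : Type u} (f : X →. Y) (g : X' →. Y') : X × X' →. Y × Y' :=
  fun p => (f p.1).bind fun y => (g p.2).map fun y' => (y, y')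

/-- The relational converse of a partial function (the partial inverse, when
the partial function is injective on its domain). -/
noncomputable def pinv {X Y : Type u} (f : X →. Y) : Y →. X :=
  fun y => ⟨∃ x, y ∈ f x, fun h => h.choose⟩

/-- A partial function is a partial injection when it is injective on its
domain. -/
def IsPInj {X Y : Type u} (f : X →. Y) : Prop :=
  ∀ ⦃x₁ x₂ : X⦄ ⦃y : Y⦄, y ∈ f x₁ → y ∈ f x₂ → x₁ = x₂

/-- Partial injections. -/
def PInj (X Y : Type u) : Type u := {f : X →. Y // IsPInj f}

theorem isPInj_pid (X : Type u) : IsPInj (pid X) := fun _ _ _ h₁ h₂ =>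
  (Part.mem_some_iff.mp h₁).symm.trans (Part.mem_some_iff.mp h₂)

theorem isPInj_pofFun {X Y : Type u} {f : X → Y} (hf : Function.Injective f) :
    IsPInj (pofFun f) := fun _ _ _ h₁ h₂ =>
  hf ((Part.mem_some_iff.mp h₁).symm.trans (Part.mem_some_iff.mp h₂))

theorem IsPInj.pcomp {X Y Z : Type u} {f : X →. Y} {g : Y →. Z}
    (hf : IsPInj f) (hg : IsPInj g) : IsPInj (pcomp f g) := by
  intro x₁ x₂ z h₁ h₂
  obtain ⟨y₁, hy₁, hz₁⟩ := Part.mem_bind_iff.mp h₁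
  obtain ⟨y₂, hy₂, hz₂⟩ := Part.mem_bind_iff.mp h₂
  obtain rfl := hg hz₁ hz₂
  exact hf hy₁ hy₂

theorem IsPInj.ptensor {X Y X' Y' : Type u} {f : X →. Y} {g : X' →. Y'}
    (hf : IsPInj f) (hg : IsPInj g) : IsPInj (ptensor f g) := by
  intro p₁ p₂ q h₁ h₂
  obtain ⟨y₁, hy₁, hq₁⟩ := Part.mem_bind_iff.mp h₁
  obtain ⟨y₁', hy₁', he₁⟩ := (Part.mem_map_iff _).mp hq₁
  obtain ⟨y₂, hy₂, hq₂⟩ := Part.mem_bind_iff.mp h₂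
  obtain ⟨y₂', hy₂', he₂⟩ := (Part.mem_map_iff _).mp hq₂
  have h12 := he₁.trans he₂.symm
  obtain rfl : y₁ = y₂ := congrArg Prod.fst h12
  obtain rfl : y₁' = y₂' := congrArg Prod.snd h12
  exact Prod.ext (hf hy₁ hy₂) (hg hy₁' hy₂')

theorem isPInj_pinv {X Y : Type u} (f : X →. Y) : IsPInj (pinv f) := by
  intro y₁ y₂ x h₁ h₂
  obtain ⟨d₁, e₁⟩ := h₁
  obtain ⟨d₂, e₂⟩ := h₂
  have s₁ : y₁ ∈ f x := by rw [← e₁]; exact d₁.choose_spec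
  have s₂ : y₂ ∈ f x := by rw [← e₂]; exact d₂.choose_spec
  exact Part.mem_unique s₁ s₂
universe w

/-- The underlying data of a prop: a strict symmetric monoidal category whose
objects are the natural numbers with tensor `n ⊗ m = n + m`. -/
structure PROPCore : Type (w + 1) where
  Hom : ℕ → ℕ → Type w
  id : ∀ n : ℕ, Hom n n
  comp : ∀ {a b c : ℕ}, Hom a b → Hom b c → Hom a c
  tensor : ∀ {a b c d : ℕ}, Hom a b → Hom c d → Hom (a + c) (b + d)
  swap : ∀ a b : ℕ, Hom (a + b) (b + a)

/-- Transport of homs along equalities of objects. -/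
def PROPCore.cast (P : PROPCore.{w}) {a b a' b' : ℕ} (h₁ : a = a') (h₂ : b = b')
    (f : P.Hom a b) : P.Hom a' b' := by subst h₁; subst h₂; exact f

/-- The laws of a prop (strict symmetric monoidal category on `(ℕ, +)`). -/
structure PROPLaws (P : PROPCore.{w}) : Prop where
  id_comp : ∀ {a b : ℕ} (f : P.Hom a b), P.comp (P.id a) f = f
  comp_id : ∀ {a b : ℕ} (f : P.Hom a b), P.comp f (P.id b) = f
  assoc : ∀ {a b c d : ℕ} (f : P.Hom a b) (g : P.Hom b c) (h : P.Hom c d),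
    P.comp (P.comp f g) h = P.comp f (P.comp g h)
  tensor_id : ∀ a b : ℕ, P.tensor (P.id a) (P.id b) = P.id (a + b)
  tensor_comp : ∀ {a b c a' b' c' : ℕ} (f : P.Hom a b) (g : P.Hom b c)
    (f' : P.Hom a' b') (g' : P.Hom b' c'),
    P.tensor (P.comp f g) (P.comp f' g') = P.comp (P.tensor f f') (P.tensor g g')
  tensor_assoc : ∀ {a b c d e k : ℕ} (f : P.Hom a b) (g : P.Hom c d) (h : P.Hom e k),
    P.tensor (P.tensor f g) h =
      P.cast (Nat.add_assoc a c e).symm (Nat.add_assoc b d k).symm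
        (P.tensor f (P.tensor g h))
  tensor_unit_left : ∀ {a b : ℕ} (f : P.Hom a b),
    P.tensor (P.id 0) f = P.cast (Nat.zero_add a).symm (Nat.zero_add b).symm f
  tensor_unit_right : ∀ {a b : ℕ} (f : P.Hom a b), P.tensor f (P.id 0) = f
  swap_swap : ∀ a b : ℕ, P.comp (P.swap a b) (P.swap b a) = P.id (a + b)
  swap_natural : ∀ {a b c d : ℕ} (f : P.Hom a b) (g : P.Hom c d),
    P.comp (P.tensor f g) (P.swap b d) = P.comp (P.swap a c) (P.tensor g f)
  swap_zero : ∀ a : ℕ, P.swap a 0 = P.cast rfl (Nat.zero_add a).symm (P.id a)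
  swap_hexagon : ∀ a b c : ℕ,
    P.swap (a + b) c =
      P.comp
        (P.cast (Nat.add_assoc a b c).symm (Nat.add_assoc a c b).symm
          (P.tensor (P.id a) (P.swap b c)))
        (P.cast rfl (Nat.add_assoc c a b) (P.tensor (P.swap a c) (P.id b)))

/-- A prop. -/
structure PROP : Type (w + 1) where
  core : PROPCore.{w}
  laws : PROPLaws core

/-- A morphism of props (an identity-on-objects strict symmetric monoidal
functor), expressed as a hom-wise map preserving the structure. -/
def IsPROPHom (P : PROPCore.{w}) (Q : PROPCore.{w'})
    (Φ : ∀ a b : ℕ, P.Hom a b → Q.Hom a b) : Prop :=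
  (∀ n : ℕ, Φ n n (P.id n) = Q.id n) ∧
  (∀ (a b c : ℕ) (f : P.Hom a b) (g : P.Hom b c),
    Φ a c (P.comp f g) = Q.comp (Φ a b f) (Φ b c g)) ∧
  (∀ (a b c d : ℕ) (f : P.Hom a b) (g : P.Hom c d),
    Φ (a + c) (b + d) (P.tensor f g) = Q.tensor (Φ a b f) (Φ c d g)) ∧
  (∀ a b : ℕ, Φ (a + b) (b + a) (P.swap a b) = Q.swap a b)
/-- The canonical identification `Fin (2^(a+c)) ≃ Fin (2^a) × Fin (2^c)`. -/
def pow2Equiv (a c : ℕ) : Fin (2 ^ (a + c)) ≃ Fin (2 ^ a) × Fin (2 ^ c) :=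
  (finCongr (pow_add 2 a c)).trans finProdFinEquiv.symm

/-- Morphisms of the prop `FPar₂`: partial functions `Fin (2^a) ⇀ Fin (2^b)`. -/
def parHom (a b : ℕ) : Type := Fin (2 ^ a) →. Fin (2 ^ b)

/-- The tensor of `FPar₂`: the cartesian product of partial functions,
transported along the identifications `Fin (2^(a+c)) ≃ Fin (2^a) × Fin (2^c)`. -/
def parTensor {a b c d : ℕ} (f : parHom a b) (g : parHom c d) : parHom (a + c) (b + d) :=
  pcomp (pofFun (pow2Equiv a c)) (pcomp (ptensor f g) (pofFun (pow2Equiv b d).symm))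

/-- The symmetry bijection `Fin (2^(a+b)) ≃ Fin (2^(b+a))`. -/
def swapEquiv (a b : ℕ) : Fin (2 ^ (a + b)) ≃ Fin (2 ^ (b + a)) :=
  (pow2Equiv a b).trans ((Equiv.prodComm _ _).trans (pow2Equiv b a).symm)

/-- The prop of partial functions between the `Fin (2^n)`. -/
def FPar2Core : PROPCore.{0} where
  Hom := parHom
  id n := pid (Fin (2 ^ n))
  comp f g := pcomp f g
  tensor f g := parTensor f g
  swap a b := pofFun (swapEquiv a b)

/-- The opposite prop of `FPar₂`. -/
def FPar2opCore : PROPCore.{0} where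
  Hom a b := parHom b a
  id n := pid (Fin (2 ^ n))
  comp f g := pcomp g f
  tensor f g := parTensor f g
  swap a b := pofFun (swapEquiv b a)

/-- Morphisms of the prop `FPinj₂` (= `TOF`): partial injections between the
`Fin (2^n)`. -/
def pinjHom (a b : ℕ) : Type := PInj (Fin (2 ^ a)) (Fin (2 ^ b))

theorem isPInj_parTensor {a b c d : ℕ} {f : parHom a b} {g : parHom c d}
    (hf : IsPInj f) (hg : IsPInj g) : IsPInj (parTensor f g) :=
  (isPInj_pofFun (pow2Equiv a c).injective).pcomp
    ((hf.ptensor hg).pcomp (isPInj_pofFun (pow2Equiv b d).symm.injective))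

/-- The prop of partial injections between the `Fin (2^n)`. -/
def FPinj2Core : PROPCore.{0} where
  Hom := pinjHom
  id n := ⟨pid (Fin (2 ^ n)), isPInj_pid _⟩
  comp f g := ⟨pcomp f.1 g.1, f.2.pcomp g.2⟩
  tensor f g := ⟨parTensor f.1 g.1, isPInj_parTensor f.2 g.2⟩
  swap a b := ⟨pofFun (swapEquiv a b), isPInj_pofFun (swapEquiv a b).injective⟩

/-- The inclusion `j : FPinj₂ → FPar₂`. -/
def jmap (a b : ℕ) (f : FPinj2Core.Hom a b) : FPar2Core.Hom a b := f.1

/-- The partial inverse of a partial injection, as a partial injection. -/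
noncomputable def pinjInv {X Y : Type} (f : PInj X Y) : PInj Y X :=
  ⟨pinv f.1, isPInj_pinv f.1⟩

/-- The map `j° : FPinj₂ → FPar₂^op` sending a partial injection to its
partial inverse (relational converse). -/
noncomputable def jopmap (a b : ℕ) (f : FPinj2Core.Hom a b) : FPar2opCore.Hom a b :=
  pinv f.1
/-- A span of finite types between `Fin n` and `Fin m`. -/
structure SpanRep (n m : ℕ) : Type 1 where
  carrier : Type
  [fin : Fintype carrier]
  left : carrier → Fin n
  right : carrier → Fin m

attribute [instance] SpanRep.fin

/-- Two spans are identified when a bijection of their apices commutes with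
both legs. -/
def spanEqv {n m : ℕ} (s t : SpanRep n m) : Prop :=
  ∃ e : s.carrier ≃ t.carrier, (∀ c, t.left (e c) = s.left c) ∧ (∀ c, t.right (e c) = s.right c)

/-- Hom-sets of the span category: isomorphism classes of spans. -/
def SpanHom (n m : ℕ) : Type 1 := Quot (@spanEqv n m)

/-- The class of a span. -/
def sMk {n m : ℕ} (s : SpanRep n m) : SpanHom n m := Quot.mk _ s

/-- The identity span. -/
def spanRepId (n : ℕ) : SpanRep n n := { carrier := Fin n, left := id, right := id }

/-- Composition of spans by pullback. -/
def spanRepComp {n m k : ℕ} (s : SpanRep n m) (t : SpanRep m k) : SpanRep n k where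
  carrier := {p : s.carrier × t.carrier // s.right p.1 = t.left p.2}
  left p := s.left p.1.1
  right p := t.right p.1.2

theorem spanEqv_comp_left {n m k : ℕ} {s s' : SpanRep n m} (t : SpanRep m k)
    (h : spanEqv s s') : spanEqv (spanRepComp s t) (spanRepComp s' t) := by
  obtain ⟨e, hl, hr⟩ := h
  refine ⟨Equiv.subtypeEquiv (e.prodCongr (Equiv.refl t.carrier)) fun p => ?_,
    fun c => ?_, fun c => ?_⟩
  · show s.right p.1 = t.left p.2 ↔ s'.right (e p.1) = t.left p.2
    rw [hr p.1]
  · show s'.left (e c.1.1) = s.left c.1.1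
    exact hl c.1.1
  · rfl

theorem spanEqv_comp_right {n m k : ℕ} (s : SpanRep n m) {t t' : SpanRep m k}
    (h : spanEqv t t') : spanEqv (spanRepComp s t) (spanRepComp s t') := by
  obtain ⟨e, hl, hr⟩ := h
  refine ⟨Equiv.subtypeEquiv ((Equiv.refl s.carrier).prodCongr e) fun p => ?_,
    fun c => ?_, fun c => ?_⟩
  · show s.right p.1 = t.left p.2 ↔ s.right p.1 = t'.left (e p.2)
    rw [hl p.2]
  · rfl
  · show t'.right (e c.1.2) = t.right c.1.2
    exact hr c.1.2

/-- Composition descends to isomorphism classes of spans. -/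
def spanComp {n m k : ℕ} : SpanHom n m → SpanHom m k → SpanHom n k :=
  Quot.lift₂ (fun s t => sMk (spanRepComp s t))
    (fun s _ _ h => Quot.sound (spanEqv_comp_right s h))
    (fun _ _ t h => Quot.sound (spanEqv_comp_left t h))
/-- The tensor of spans for the prop `FSpan₂`, transported along
`Fin (2^(a+c)) ≃ Fin (2^a) × Fin (2^c)`. -/
def spanRepTensor2 {a b c d : ℕ} (s : SpanRep (2 ^ a) (2 ^ b)) (t : SpanRep (2 ^ c) (2 ^ d)) :
    SpanRep (2 ^ (a + c)) (2 ^ (b + d)) where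
  carrier := s.carrier × t.carrier
  left p := (pow2Equiv a c).symm (s.left p.1, t.left p.2)
  right p := (pow2Equiv b d).symm (s.right p.1, t.right p.2)

theorem spanEqv_tensor2_left {a b c d : ℕ} {s s' : SpanRep (2 ^ a) (2 ^ b)}
    (t : SpanRep (2 ^ c) (2 ^ d)) (h : spanEqv s s') :
    spanEqv (spanRepTensor2 s t) (spanRepTensor2 s' t) := by
  obtain ⟨e, hl, hr⟩ := h
  refine ⟨e.prodCongr (Equiv.refl t.carrier), fun p => ?_, fun p => ?_⟩
  · show (pow2Equiv a c).symm (s'.left (e p.1), t.left p.2) = _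
    rw [hl p.1]; rfl
  · show (pow2Equiv b d).symm (s'.right (e p.1), t.right p.2) = _
    rw [hr p.1]; rfl

theorem spanEqv_tensor2_right {a b c d : ℕ} (s : SpanRep (2 ^ a) (2 ^ b))
    {t t' : SpanRep (2 ^ c) (2 ^ d)} (h : spanEqv t t') :
    spanEqv (spanRepTensor2 s t) (spanRepTensor2 s t') := by
  obtain ⟨e, hl, hr⟩ := h
  refine ⟨(Equiv.refl s.carrier).prodCongr e, fun p => ?_, fun p => ?_⟩
  · show (pow2Equiv a c).symm (s.left p.1, t'.left (e p.2)) = _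
    rw [hl p.2]; rfl
  · show (pow2Equiv b d).symm (s.right p.1, t'.right (e p.2)) = _
    rw [hr p.2]; rfl

/-- The tensor of `FSpan₂` on isomorphism classes. -/
def spanTensor2 {a b c d : ℕ} :
    SpanHom (2 ^ a) (2 ^ b) → SpanHom (2 ^ c) (2 ^ d) → SpanHom (2 ^ (a + c)) (2 ^ (b + d)) :=
  Quot.lift₂ (fun s t => sMk (spanRepTensor2 s t))
    (fun s _ _ h => Quot.sound (spanEqv_tensor2_right s h))
    (fun _ _ t h => Quot.sound (spanEqv_tensor2_left t h))

/-- The prop `FSpan₂` of isomorphism classes of spans of finite types between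
the `Fin (2^n)` (the full subcategory of spans of finite ordinals spanned by
the powers of two). -/
def FSpan2Core : PROPCore.{1} where
  Hom a b := SpanHom (2 ^ a) (2 ^ b)
  id n := sMk (spanRepId (2 ^ n))
  comp := spanComp
  tensor := spanTensor2
  swap a b := sMk { carrier := Fin (2 ^ (a + b)), left := _root_.id, right := swapEquiv a b }

/-- The span of a partial function: its domain of definition, included into
the source and mapped into the target. -/
noncomputable def parToSpan {a b : ℕ} (f : parHom a b) : SpanRep (2 ^ a) (2 ^ b) := by
  classical
  exact
    { carrier := {x : Fin (2 ^ a) // (f x).Dom}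
      left := fun x => x.1
      right := fun x => (f x.1).get x.2 }

/-- Reversal of a span. -/
def spanRev {n m : ℕ} (s : SpanRep n m) : SpanRep m n :=
  { carrier := s.carrier, left := s.right, right := s.left }

/-- The prop morphism `P : FPar₂ → FSpan₂`, sending a partial function to the
class of its span of definition. -/
noncomputable def Pmap (a b : ℕ) (f : FPar2Core.Hom a b) : FSpan2Core.Hom a b :=
  sMk (parToSpan f)

/-- The prop morphism `P° : FPar₂^op → FSpan₂`, sending a partial function to
the class of its reversed span of definition. -/
noncomputable def Popmap (a b : ℕ) (f : FPar2opCore.Hom a b) : FSpan2Core.Hom a b :=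
  sMk (spanRev (parToSpan f))


/-!
A span `A ← C → B` with injective left leg `j` and right leg `f` is the partial function
`j c ↦ f c`, and every span of finite sets factors as `P° l ⨾ P r`, where `l, r` are its legs
transported along an embedding of `C` into some `Fin (2^d)`. A mediating `H` must therefore send
the span to `F l ⨾ G r`, which gives uniqueness. For existence, `F l ⨾ G r` does not depend on
the embedding: two embeddings differ by a partial injection `u`, and `j° ; F = j ; G` says
`F u = G u°`, which moves `u` from the `F` side to the `G` side. Compatibility with composition
is the Beck–Chevalley condition `G h ⨾ F g = F π₁ ⨾ G π₂` for the pullback `π₁, π₂` of `h` and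
`g`. It follows by factoring `h` and `g` through their graphs, which are partial injections,
followed by projections, and from the fact that in a prop a composite `a → 0 → b` is a tensor
product up to a symmetry.
-/

section PartialFunctions

variable {C X Y Z W : Type u}

theorem mem_pcomp {f : X →. Y} {g : Y →. Z} {x : X} {z : Z} :
    z ∈ pcomp f g x ↔ ∃ y ∈ f x, z ∈ g y :=
  Part.mem_bind_iff

theorem mem_pid {x y : X} : y ∈ pid X x ↔ y = x := Part.mem_some_iff

theorem mem_pofFun {f : X → Y} {x : X} {y : Y} : y ∈ pofFun f x ↔ y = f x :=
  Part.mem_some_iff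

theorem mem_ptensor {X' Y' : Type u} {f : X →. Y} {g : X' →. Y'} {p : X × X'} {q : Y × Y'} :
    q ∈ ptensor f g p ↔ q.1 ∈ f p.1 ∧ q.2 ∈ g p.2 := by
  simp only [ptensor, Part.mem_bind_iff, Part.mem_map_iff]
  constructor
  · rintro ⟨y, hy, y', hy', rfl⟩
    exact ⟨hy, hy'⟩
  · exact fun ⟨hy, hy'⟩ => ⟨q.1, hy, q.2, hy', rfl⟩

theorem pcomp_assoc (f : X →. Y) (g : Y →. Z) (h : Z →. W) :
    pcomp (pcomp f g) h = pcomp f (pcomp g h) :=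
  funext fun x => Part.bind_assoc (f x) g h

theorem mem_pinv {f : X →. Y} (hf : IsPInj f) {x : X} {y : Y} : x ∈ pinv f y ↔ y ∈ f x := by
  constructor
  · rintro ⟨h, rfl⟩
    exact h.choose_spec
  · intro hx
    have hd : ∃ x', y ∈ f x' := ⟨x, hx⟩
    exact ⟨hd, hf hd.choose_spec hx⟩

theorem pinv_pinv {f : X →. Y} (hf : IsPInj f) : pinv (pinv f) = f :=
  PFun.ext fun _ _ => (mem_pinv (isPInj_pinv f)).trans (mem_pinv hf)

theorem pinv_pid : pinv (pid X) = pid X :=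
  PFun.ext fun _ _ => by rw [mem_pinv (isPInj_pid X), mem_pid, mem_pid, eq_comm]

theorem pinv_pcomp {f : X →. Y} {g : Y →. Z} (hf : IsPInj f) (hg : IsPInj g) :
    pinv (pcomp f g) = pcomp (pinv g) (pinv f) :=
  PFun.ext fun z x => by
    simp only [mem_pinv (hf.pcomp hg), mem_pcomp, mem_pinv hf, mem_pinv hg]
    exact ⟨fun ⟨y, h1, h2⟩ => ⟨y, h2, h1⟩, fun ⟨y, h1, h2⟩ => ⟨y, h2, h1⟩⟩

theorem pinv_pofFun (e : X ≃ Y) : pinv (pofFun e) = pofFun e.symm :=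
  PFun.ext fun _ _ => by
    rw [mem_pinv (isPInj_pofFun e.injective), mem_pofFun, mem_pofFun, e.eq_symm_apply, eq_comm]

def prestrict (D : Set X) : X →. X := PFun.res id D

theorem mem_prestrict {D : Set X} {x y : X} : y ∈ prestrict D x ↔ x ∈ D ∧ y = x := by
  rw [prestrict, PFun.mem_res, id, eq_comm]

theorem isPInj_prestrict (D : Set X) : IsPInj (prestrict D) := fun _ _ _ h₁ h₂ =>
  (mem_prestrict.mp h₁).2.symm.trans (mem_prestrict.mp h₂).2

theorem pinv_prestrict (D : Set X) : pinv (prestrict D) = prestrict D :=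
  PFun.ext fun _ _ => by
    rw [mem_pinv (isPInj_prestrict D), mem_prestrict, mem_prestrict]
    exact ⟨fun ⟨h, e⟩ => ⟨e ▸ h, e.symm⟩, fun ⟨h, e⟩ => ⟨e ▸ h, e.symm⟩⟩

theorem mem_prestrict_pcomp {D : Set X} {f : X →. Y} {x : X} {y : Y} :
    y ∈ pcomp (prestrict D) f x ↔ x ∈ D ∧ y ∈ f x := by
  simp only [mem_pcomp, mem_prestrict]
  exact ⟨fun ⟨_, ⟨hx, rfl⟩, hy⟩ => ⟨hx, hy⟩, fun ⟨hx, hy⟩ => ⟨x, ⟨hx, rfl⟩, hy⟩⟩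

theorem prestrict_dom_pcomp (f : X →. Y) : pcomp (prestrict f.Dom) f = f :=
  PFun.ext fun _ _ => by
    rw [mem_prestrict_pcomp]
    exact and_iff_right_of_imp fun h => Part.dom_iff_mem.mpr ⟨_, h⟩

/-- The partial function `j c ↦ f c` presented by a span `X ← C → Y` whose left leg `j` is
injective. -/
noncomputable def pfunOfSpan (j : C → X) (f : C → Y) : X →. Y := pcomp (pinv (pofFun j)) (pofFun f)

theorem mem_pfunOfSpan {j : C → X} (hj : j.Injective) {f : C → Y} {x : X} {y : Y} :
    y ∈ pfunOfSpan j f x ↔ ∃ c, j c = x ∧ f c = y := by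
  simp only [pfunOfSpan, mem_pcomp, mem_pinv (isPInj_pofFun hj), mem_pofFun]
  exact ⟨fun ⟨c, hc, hy⟩ => ⟨c, hc.symm, hy.symm⟩, fun ⟨c, hc, hy⟩ => ⟨c, hc.symm, hy.symm⟩⟩

theorem mem_pfunOfSpan_apply {j : C → X} (hj : j.Injective) {f : C → Y} {c : C} {y : Y} :
    y ∈ pfunOfSpan j f (j c) ↔ f c = y := by
  rw [mem_pfunOfSpan hj]
  exact ⟨fun ⟨_, hc, h⟩ => hj hc ▸ h, fun h => ⟨c, rfl, h⟩⟩

theorem isPInj_pfunOfSpan {j : C → X} {f : C → Y} (hf : f.Injective) :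
    IsPInj (pfunOfSpan j f) :=
  (isPInj_pinv _).pcomp (isPInj_pofFun hf)

theorem pinv_pfunOfSpan {j : C → X} {f : C → Y} (hj : j.Injective) (hf : f.Injective) :
    pinv (pfunOfSpan j f) = pfunOfSpan f j :=
  PFun.ext fun _ _ => by
    rw [mem_pinv (isPInj_pfunOfSpan hf), mem_pfunOfSpan hj, mem_pfunOfSpan hf]
    exact exists_congr fun _ => and_comm

theorem pfunOfSpan_pcomp_pfunOfSpan {C' : Type u} {j : C → X} {j' : C' → Y} (k : C → C')
    (g : C' → Z) (hj : j.Injective) (hj' : j'.Injective) :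
    pcomp (pfunOfSpan j (j' ∘ k)) (pfunOfSpan j' g) = pfunOfSpan j (g ∘ k) :=
  PFun.ext fun _ _ => by
    simp only [mem_pcomp, mem_pfunOfSpan hj, mem_pfunOfSpan hj', Function.comp]
    constructor
    · rintro ⟨_, ⟨c, rfl, rfl⟩, c', hc', rfl⟩
      exact ⟨c, rfl, by rw [hj' hc']⟩
    · rintro ⟨c, rfl, rfl⟩
      exact ⟨_, ⟨c, rfl, rfl⟩, k c, rfl, rfl⟩

theorem pfunOfSpan_comp_equiv {C' : Type u} (e : C ≃ C') {j : C' → X} (hj : j.Injective)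
    (f : C' → Y) : pfunOfSpan (j ∘ e) (f ∘ e) = pfunOfSpan j f :=
  PFun.ext fun _ _ => by
    rw [mem_pfunOfSpan (hj.comp e.injective), mem_pfunOfSpan hj]
    exact ⟨fun ⟨c, h⟩ => ⟨e c, h⟩, fun ⟨c, h⟩ => ⟨e.symm c, by simpa using h⟩⟩

theorem pofFun_id : pofFun (id : X → X) = pid X := rfl

theorem pfunOfSpan_id (f : X → Y) : pfunOfSpan id f = pofFun f :=
  PFun.ext fun _ _ => by
    rw [mem_pfunOfSpan Function.injective_id, mem_pofFun]
    exact ⟨fun ⟨_, rfl, h⟩ => h.symm, fun h => ⟨_, rfl, h.symm⟩⟩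

end PartialFunctions

theorem mem_parTensor {a b c d : ℕ} {f : parHom a b} {g : parHom c d}
    {x : Fin (2 ^ (a + c))} {q : Fin (2 ^ (b + d))} :
    q ∈ parTensor f g x ↔
      (pow2Equiv b d q).1 ∈ f (pow2Equiv a c x).1 ∧
        (pow2Equiv b d q).2 ∈ g (pow2Equiv a c x).2 := by
  simp only [parTensor, mem_pcomp, mem_pofFun]
  constructor
  · rintro ⟨_, rfl, y, hy, rfl⟩
    simpa using mem_ptensor.mp hy
  · exact fun h => ⟨_, rfl, pow2Equiv b d q, mem_ptensor.mpr h, by simp⟩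

theorem pinv_parTensor {a b c d : ℕ} {f : parHom a b} {g : parHom c d}
    (hf : IsPInj f) (hg : IsPInj g) : pinv (parTensor f g) = parTensor (pinv f) (pinv g) :=
  PFun.ext fun _ _ => by
    erw [mem_pinv (isPInj_parTensor hf hg), mem_parTensor, mem_parTensor, mem_pinv hf, mem_pinv hg]

theorem swapEquiv_symm (a b : ℕ) : (swapEquiv a b).symm = swapEquiv b a := by
  ext x
  simp [swapEquiv]

theorem jmap_isPROPHom : IsPROPHom FPinj2Core FPar2Core jmap :=
  ⟨fun _ => rfl, fun _ _ _ _ _ => rfl, fun _ _ _ _ _ _ => rfl, fun _ _ => rfl⟩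

theorem jopmap_isPROPHom : IsPROPHom FPinj2Core FPar2opCore jopmap :=
  ⟨fun _ => pinv_pid, fun _ _ _ f g => pinv_pcomp f.2 g.2,
    fun _ _ _ _ f g => pinv_parTensor f.2 g.2,
    fun a b => (pinv_pofFun (swapEquiv a b)).trans (by rw [swapEquiv_symm]; rfl)⟩

theorem spanEqv.refl {n m : ℕ} (s : SpanRep n m) : spanEqv s s :=
  ⟨Equiv.refl _, fun _ => rfl, fun _ => rfl⟩

theorem spanEqv.trans {n m : ℕ} {s t r : SpanRep n m} :
    spanEqv s t → spanEqv t r → spanEqv s r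
  | ⟨e, hl, hr⟩, ⟨e', hl', hr'⟩ =>
    ⟨e.trans e', fun c => (hl' (e c)).trans (hl c), fun c => (hr' (e c)).trans (hr c)⟩

theorem spanEqv.rev {n m : ℕ} {s t : SpanRep n m} : spanEqv s t → spanEqv (spanRev s) (spanRev t)
  | ⟨e, hl, hr⟩ => ⟨e, hr, hl⟩

theorem spanRev_spanRepComp {n m k : ℕ} (s : SpanRep n m) (t : SpanRep m k) :
    spanEqv (spanRev (spanRepComp s t)) (spanRepComp (spanRev t) (spanRev s)) :=
  ⟨⟨fun p => ⟨p.1.swap, p.2.symm⟩, fun p => ⟨p.1.swap, p.2.symm⟩, fun _ => rfl, fun _ => rfl⟩,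
    fun _ => rfl, fun _ => rfl⟩

theorem parToSpan_pid (n : ℕ) : spanEqv (parToSpan (pid (Fin (2 ^ n)))) (spanRepId (2 ^ n)) :=
  ⟨Equiv.subtypeUnivEquiv fun _ => trivial, fun _ => rfl, fun _ => rfl⟩

theorem parToSpan_pcomp {a b c : ℕ} (f : parHom a b) (g : parHom b c) :
    spanEqv (parToSpan (pcomp f g)) (spanRepComp (parToSpan f) (parToSpan g)) := by
  have hf : ∀ {x}, (pcomp f g x).Dom → (f x).Dom := fun h =>
    let ⟨_, hz⟩ := Part.dom_iff_mem.mp h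
    let ⟨y, hy, _⟩ := mem_pcomp.mp hz
    Part.dom_iff_mem.mpr ⟨y, hy⟩
  have hfg : ∀ {x} (h : (pcomp f g x).Dom),
      ∃ hg : (g ((f x).get (hf h))).Dom, (g _).get hg = (pcomp f g x).get h := fun h =>
    let ⟨y, hy, hz⟩ := mem_pcomp.mp (Part.get_mem h)
    Part.get_eq_of_mem hy (hf h) ▸ ⟨Part.dom_iff_mem.mpr ⟨_, hz⟩, Part.get_eq_of_mem hz _⟩
  refine ⟨⟨fun x => ⟨(⟨x.1, hf x.2⟩, ⟨_, (hfg x.2).1⟩), rfl⟩, fun p => ⟨p.1.1.1, ?_⟩,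
    fun _ => rfl, fun p => ?_⟩, fun _ => rfl, fun x => (hfg x.2).2⟩
  · obtain ⟨⟨⟨x, hx⟩, ⟨y, hy⟩⟩, hxy⟩ := p
    change (f x).get hx = y at hxy
    subst hxy
    exact Part.dom_iff_mem.mpr ⟨_, mem_pcomp.mpr ⟨_, Part.get_mem hx, Part.get_mem hy⟩⟩
  · obtain ⟨⟨⟨x, hx⟩, ⟨y, hy⟩⟩, hxy⟩ := p
    change (f x).get hx = y at hxy
    subst hxy
    rfl

theorem parToSpan_parTensor {a b c d : ℕ} (f : parHom a b) (g : parHom c d) :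
    spanEqv (parToSpan (parTensor f g)) (spanRepTensor2 (parToSpan f) (parToSpan g)) := by
  have hdom : ∀ x,
      (parTensor f g x).Dom ↔ (f (pow2Equiv a c x).1).Dom ∧ (g (pow2Equiv a c x).2).Dom :=
    fun x => by
      simp only [Part.dom_iff_mem, mem_parTensor]
      constructor
      · rintro ⟨q, h₁, h₂⟩
        exact ⟨⟨_, h₁⟩, ⟨_, h₂⟩⟩
      · rintro ⟨⟨y, h₁⟩, ⟨y', h₂⟩⟩
        exact ⟨(pow2Equiv b d).symm (y, y'), by simpa using h₁, by simpa using h₂⟩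
  let e : (parToSpan (parTensor f g)).carrier ≃ {x // (f x).Dom} × {x // (g x).Dom} :=
    ((pow2Equiv a c).subtypeEquiv hdom).trans (Equiv.subtypeProdEquivProd)
  refine ⟨e, fun x => (pow2Equiv a c).symm_apply_apply x.1, fun x => ?_⟩
  have hx := mem_parTensor.mp (Part.get_mem x.2)
  exact ((pow2Equiv b d).symm_apply_eq).mpr
    (Prod.ext (Part.get_eq_of_mem hx.1 _) (Part.get_eq_of_mem hx.2 _))

theorem parToSpan_pofFun_swapEquiv (a b : ℕ) :
    spanEqv (parToSpan (pofFun (swapEquiv a b)))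
      { carrier := Fin (2 ^ (a + b)), left := _root_.id, right := swapEquiv a b } :=
  ⟨Equiv.subtypeUnivEquiv fun _ => trivial, fun _ => rfl, fun _ => rfl⟩

theorem Pmap_isPROPHom : IsPROPHom FPar2Core FSpan2Core Pmap :=
  ⟨fun n => Quot.sound (parToSpan_pid n), fun _ _ _ f g => Quot.sound (parToSpan_pcomp f g),
    fun _ _ _ _ f g => Quot.sound (parToSpan_parTensor f g),
    fun a b => Quot.sound (parToSpan_pofFun_swapEquiv a b)⟩

theorem Popmap_isPROPHom : IsPROPHom FPar2opCore FSpan2Core Popmap := by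
  refine ⟨fun n => Quot.sound (parToSpan_pid n).rev, fun _ _ _ f g => Quot.sound
    ((parToSpan_pcomp g f).rev.trans (spanRev_spanRepComp _ _)),
    fun _ _ _ _ f g => Quot.sound (parToSpan_parTensor f g).rev, fun a b => Quot.sound ?_⟩
  refine ⟨(Equiv.subtypeUnivEquiv fun _ => trivial).trans (swapEquiv b a), fun _ => rfl,
    fun x => ?_⟩
  show swapEquiv a b (swapEquiv b a x.1) = x.1
  rw [← swapEquiv_symm a b, Equiv.apply_symm_apply]

theorem spanRev_parToSpan_pinv {a b : ℕ} {f : parHom a b} (hf : IsPInj f) :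
    spanEqv (spanRev (parToSpan (pinv f))) (parToSpan f) := by
  refine ⟨⟨fun y => ⟨(pinv f y.1).get y.2, Part.dom_iff_mem.mpr ⟨y.1, ?_⟩⟩,
    fun x => ⟨(f x.1).get x.2, ⟨x.1, Part.get_mem x.2⟩⟩, fun y => ?_, fun x => ?_⟩,
    fun _ => rfl, fun y => ?_⟩
  · exact (mem_pinv hf).mp (Part.get_mem y.2)
  · exact Subtype.ext (Part.get_eq_of_mem ((mem_pinv hf).mp (Part.get_mem y.2)) _)
  · exact Subtype.ext (Part.get_eq_of_mem ((mem_pinv hf).mpr (Part.get_mem x.2)) _)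
  · exact Part.get_eq_of_mem ((mem_pinv hf).mp (Part.get_mem y.2)) _

theorem Popmap_jopmap (a b : ℕ) (f : FPinj2Core.Hom a b) :
    Popmap a b (jopmap a b f) = Pmap a b (jmap a b f) :=
  Quot.sound (spanRev_parToSpan_pinv f.2)

theorem parToSpan_left_injective {a b : ℕ} (f : parHom a b) : (parToSpan f).left.Injective :=
  Subtype.val_injective

theorem pfunOfSpan_parToSpan_left {a b : ℕ} (f : Fin (2 ^ a) →. Fin (2 ^ b)) :
    pfunOfSpan (parToSpan f).left (parToSpan f).left = prestrict f.Dom :=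
  PFun.ext fun _ _ => by
    rw [mem_pfunOfSpan (parToSpan_left_injective f), mem_prestrict]
    exact ⟨fun ⟨c, hc, h⟩ => ⟨hc ▸ c.2, h.symm.trans hc⟩, fun ⟨hx, h⟩ => ⟨⟨_, hx⟩, rfl, h.symm⟩⟩

theorem pfunOfSpan_parToSpan_right {a b : ℕ} (f : Fin (2 ^ a) →. Fin (2 ^ b)) :
    pfunOfSpan (parToSpan f).left (parToSpan f).right = f :=
  PFun.ext fun x y => by
    rw [mem_pfunOfSpan (parToSpan_left_injective f)]
    constructor
    · rintro ⟨c, rfl, rfl⟩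
      exact Part.get_mem c.2
    · exact fun h => ⟨⟨x, Part.dom_iff_mem.mpr ⟨y, h⟩⟩, rfl, Part.get_eq_of_mem h _⟩

theorem parTensor_pfunOfSpan {a b c d : ℕ} {C C' : Type} {j : C → Fin (2 ^ a)}
    {j' : C' → Fin (2 ^ c)} (hj : j.Injective) (hj' : j'.Injective) (l : C → Fin (2 ^ b))
    (l' : C' → Fin (2 ^ d)) :
    parTensor (pfunOfSpan j l) (pfunOfSpan j' l') =
      pfunOfSpan (fun p : C × C' => (pow2Equiv a c).symm (j p.1, j' p.2))
        (fun p : C × C' => (pow2Equiv b d).symm (l p.1, l' p.2)) := by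
  have hJ : (fun p : C × C' => (pow2Equiv a c).symm (j p.1, j' p.2)).Injective :=
    (pow2Equiv a c).symm.injective.comp (hj.prodMap hj')
  refine PFun.ext fun x q => ?_
  rw [mem_pfunOfSpan hJ]
  erw [mem_parTensor, mem_pfunOfSpan hj, mem_pfunOfSpan hj']
  constructor
  · rintro ⟨⟨c, hc, hq⟩, ⟨c', hc', hq'⟩⟩
    refine ⟨(c, c'), ?_, ?_⟩
    · rw [Equiv.symm_apply_eq, hc, hc']
    · rw [Equiv.symm_apply_eq, hq, hq']
  · rintro ⟨⟨c, c'⟩, rfl, rfl⟩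
    simpa using ⟨⟨c, rfl, rfl⟩, ⟨c', rfl, rfl⟩⟩

theorem spanEqv_spanRepComp_pfunOfSpan {n m d : ℕ} (s : SpanRep (2 ^ n) (2 ^ m))
    {j : s.carrier → Fin (2 ^ d)} (hj : j.Injective) :
    spanEqv s (spanRepComp (spanRev (parToSpan (pfunOfSpan j s.left)))
      (parToSpan (pfunOfSpan j s.right))) := by
  have hmem : ∀ {k : ℕ} (f : s.carrier → Fin (2 ^ k)) c, f c ∈ pfunOfSpan j f (j c) := fun _ c =>
    (mem_pfunOfSpan hj).mpr ⟨c, rfl, rfl⟩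
  let φ : s.carrier → (spanRepComp (spanRev (parToSpan (pfunOfSpan j s.left)))
      (parToSpan (pfunOfSpan j s.right))).carrier := fun c =>
    ⟨(⟨j c, Part.dom_iff_mem.mpr ⟨_, hmem s.left c⟩⟩,
      ⟨j c, Part.dom_iff_mem.mpr ⟨_, hmem s.right c⟩⟩), rfl⟩
  have hφ : φ.Bijective := by
    refine ⟨fun c c' h => hj (congrArg (fun p => p.1.1.1) h),
      fun ⟨⟨⟨x, hx⟩, ⟨x', hx'⟩⟩, hxx'⟩ => ?_⟩
    change x = x' at hxx'
    subst hxx'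
    obtain ⟨c, rfl, -⟩ := (mem_pfunOfSpan hj).mp (Part.get_mem hx)
    exact ⟨c, rfl⟩
  exact ⟨Equiv.ofBijective φ hφ, fun c => Part.get_eq_of_mem (hmem s.left c) (φ c).1.1.2,
    fun c => Part.get_eq_of_mem (hmem s.right c) (φ c).1.2.2⟩

def pdel (d : ℕ) : Fin (2 ^ d) →. Fin (2 ^ 0) := pofFun fun _ => ⟨0, Nat.two_pow_pos 0⟩

def pproj (m d : ℕ) : Fin (2 ^ (m + d)) →. Fin (2 ^ m) := parTensor (pid _) (pdel d)

def pprojRight (m d : ℕ) : Fin (2 ^ (m + d)) →. Fin (2 ^ d) :=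
  pcomp (pofFun (swapEquiv m d)) (pproj d m)

def pgraph {d m : ℕ} (h : Fin (2 ^ d) →. Fin (2 ^ m)) : Fin (2 ^ d) →. Fin (2 ^ (m + d)) :=
  fun x => (h x).map fun y => (pow2Equiv m d).symm (y, x)

theorem pow2Equiv_zero_fst (m : ℕ) (y : Fin (2 ^ (m + 0))) : (pow2Equiv m 0 y).1 = y := by
  ext
  simp [pow2Equiv, finProdFinEquiv]

theorem mem_pproj {m d : ℕ} {x : Fin (2 ^ (m + d))} {y : Fin (2 ^ m)} :
    y ∈ pproj m d x ↔ y = (pow2Equiv m d x).1 := by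
  erw [pproj, mem_parTensor, mem_pid, pow2Equiv_zero_fst]
  exact and_iff_left (Part.mem_some_iff.mpr (Subsingleton.elim (α := Fin 1) _ _))

theorem mem_pprojRight {m d : ℕ} {x : Fin (2 ^ (m + d))} {y : Fin (2 ^ d)} :
    y ∈ pprojRight m d x ↔ y = (pow2Equiv m d x).2 := by
  have hswap : (pow2Equiv d m (swapEquiv m d x)).1 = (pow2Equiv m d x).2 := by
    simp [swapEquiv]
  simp only [pprojRight, mem_pcomp, mem_pofFun, exists_eq_left, mem_pproj, hswap]

theorem mem_pgraph {d m : ℕ} {h : Fin (2 ^ d) →. Fin (2 ^ m)} {x : Fin (2 ^ d)}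
    {z : Fin (2 ^ (m + d))} :
    z ∈ pgraph h x ↔ (pow2Equiv m d z).1 ∈ h x ∧ (pow2Equiv m d z).2 = x := by
  rw [pgraph, Part.mem_map_iff]
  constructor
  · rintro ⟨y, hy, rfl⟩
    simpa using hy
  · exact fun ⟨hy, hx⟩ => ⟨_, hy, by rw [Equiv.symm_apply_eq, ← hx]⟩

theorem isPInj_pgraph {d m : ℕ} (h : Fin (2 ^ d) →. Fin (2 ^ m)) : IsPInj (pgraph h) :=
  fun _ _ _ h₁ h₂ => (mem_pgraph.mp h₁).2.symm.trans (mem_pgraph.mp h₂).2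

theorem pgraph_pcomp_pproj {d m : ℕ} (h : Fin (2 ^ d) →. Fin (2 ^ m)) :
    pcomp (pgraph h) (pproj m d) = h :=
  PFun.ext fun x y => by
    simp only [mem_pcomp, mem_pgraph, mem_pproj]
    constructor
    · rintro ⟨z, ⟨hz, -⟩, rfl⟩
      exact hz
    · exact fun hy => ⟨(pow2Equiv m d).symm (y, x), by simpa using hy, by simp⟩

def pow2Equiv3 (m a b : ℕ) : Fin (2 ^ (m + (a + b))) ≃ Fin (2 ^ m) × Fin (2 ^ a) × Fin (2 ^ b) :=
  (pow2Equiv m (a + b)).trans ((Equiv.refl _).prodCongr (pow2Equiv a b))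

/-- The apex `{(v, x, y) | v ∈ h x ∧ v ∈ g y}` of the pullback of `h` and `g`, encoded in
`Fin (2 ^ (m + (a + b)))`. -/
def pullbackSet {m a b : ℕ} (h : Fin (2 ^ a) →. Fin (2 ^ m)) (g : Fin (2 ^ b) →. Fin (2 ^ m)) :
    Set (Fin (2 ^ (m + (a + b)))) :=
  {x | (pow2Equiv3 m a b x).1 ∈ h (pow2Equiv3 m a b x).2.1 ∧
    (pow2Equiv3 m a b x).1 ∈ g (pow2Equiv3 m a b x).2.2}

noncomputable def pullbackFst {m a b : ℕ} (h : Fin (2 ^ a) →. Fin (2 ^ m))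
    (g : Fin (2 ^ b) →. Fin (2 ^ m)) : Fin (2 ^ (m + (a + b))) →. Fin (2 ^ a) :=
  pcomp (prestrict (pullbackSet h g)) (pofFun fun x => (pow2Equiv3 m a b x).2.1)

noncomputable def pullbackSnd {m a b : ℕ} (h : Fin (2 ^ a) →. Fin (2 ^ m))
    (g : Fin (2 ^ b) →. Fin (2 ^ m)) : Fin (2 ^ (m + (a + b))) →. Fin (2 ^ b) :=
  pcomp (prestrict (pullbackSet h g)) (pofFun fun x => (pow2Equiv3 m a b x).2.2)

def pdropThird (m a b : ℕ) : Fin (2 ^ (m + (a + b))) →. Fin (2 ^ (m + a)) :=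
  parTensor (pid _) (pproj a b)

def pdropSecond (m a b : ℕ) : Fin (2 ^ (m + (a + b))) →. Fin (2 ^ (m + b)) :=
  parTensor (pid _) (pprojRight a b)

theorem mem_pdropThird {m a b : ℕ} {x : Fin (2 ^ (m + (a + b)))} {w : Fin (2 ^ (m + a))} :
    w ∈ pdropThird m a b x ↔
      pow2Equiv m a w = ((pow2Equiv3 m a b x).1, (pow2Equiv3 m a b x).2.1) := by
  erw [pdropThird, mem_parTensor, mem_pid, mem_pproj, Prod.ext_iff]
  rfl

theorem mem_pdropSecond {m a b : ℕ} {x : Fin (2 ^ (m + (a + b)))} {w : Fin (2 ^ (m + b))} :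
    w ∈ pdropSecond m a b x ↔
      pow2Equiv m b w = ((pow2Equiv3 m a b x).1, (pow2Equiv3 m a b x).2.2) := by
  erw [pdropSecond, mem_parTensor, mem_pid, mem_pprojRight, Prod.ext_iff]
  rfl

theorem mem_pdropThird_pcomp_pinv_pgraph {m a b : ℕ} (h : Fin (2 ^ a) →. Fin (2 ^ m))
    {x : Fin (2 ^ (m + (a + b)))} {z : Fin (2 ^ a)} :
    z ∈ pcomp (pdropThird m a b) (pinv (pgraph h)) x ↔
      (pow2Equiv3 m a b x).1 ∈ h z ∧ (pow2Equiv3 m a b x).2.1 = z := by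
  simp only [mem_pcomp, mem_pinv (isPInj_pgraph h), mem_pgraph, mem_pdropThird]
  constructor
  · rintro ⟨w, hw, h₁, h₂⟩
    rw [hw] at h₁ h₂
    exact ⟨h₁, h₂⟩
  · exact fun hz => ⟨_, Equiv.apply_symm_apply _ _, by simpa using hz⟩

theorem mem_pdropSecond_pcomp_pinv_pgraph {m a b : ℕ} (g : Fin (2 ^ b) →. Fin (2 ^ m))
    {x : Fin (2 ^ (m + (a + b)))} {z : Fin (2 ^ b)} :
    z ∈ pcomp (pdropSecond m a b) (pinv (pgraph g)) x ↔
      (pow2Equiv3 m a b x).1 ∈ g z ∧ (pow2Equiv3 m a b x).2.2 = z := by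
  simp only [mem_pcomp, mem_pinv (isPInj_pgraph g), mem_pgraph, mem_pdropSecond]
  constructor
  · rintro ⟨w, hw, h₁, h₂⟩
    rw [hw] at h₁ h₂
    exact ⟨h₁, h₂⟩
  · exact fun hz => ⟨_, Equiv.apply_symm_apply _ _, by simpa using hz⟩

theorem pullbackFst_eq_prestrict {m a b : ℕ} (h : Fin (2 ^ a) →. Fin (2 ^ m))
    (g : Fin (2 ^ b) →. Fin (2 ^ m)) :
    pullbackFst h g = pcomp (prestrict ((pcomp (pdropThird m a b) (pinv (pgraph h))).Dom ∩
        (pcomp (pdropSecond m a b) (pinv (pgraph g))).Dom))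
      (pcomp (pdropThird m a b) (pinv (pgraph h))) :=
  PFun.ext fun x y => by
    simp only [pullbackFst, pullbackSet, mem_prestrict_pcomp, mem_pofFun, Set.mem_inter_iff,
      PFun.mem_dom, mem_pdropThird_pcomp_pinv_pgraph, mem_pdropSecond_pcomp_pinv_pgraph,
      Set.mem_ofPred_eq, exists_eq_right']
    constructor
    · rintro ⟨hx, rfl⟩
      exact ⟨hx, hx.1, rfl⟩
    · rintro ⟨hx, -, rfl⟩
      exact ⟨hx, rfl⟩

theorem pullbackSnd_eq_prestrict {m a b : ℕ} (h : Fin (2 ^ a) →. Fin (2 ^ m))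
    (g : Fin (2 ^ b) →. Fin (2 ^ m)) :
    pullbackSnd h g = pcomp (prestrict ((pcomp (pdropThird m a b) (pinv (pgraph h))).Dom ∩
        (pcomp (pdropSecond m a b) (pinv (pgraph g))).Dom))
      (pcomp (pdropSecond m a b) (pinv (pgraph g))) :=
  PFun.ext fun x y => by
    simp only [pullbackSnd, pullbackSet, mem_prestrict_pcomp, mem_pofFun, Set.mem_inter_iff,
      PFun.mem_dom, mem_pdropThird_pcomp_pinv_pgraph, mem_pdropSecond_pcomp_pinv_pgraph,
      Set.mem_ofPred_eq, exists_eq_right']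
    constructor
    · rintro ⟨hx, rfl⟩
      exact ⟨hx, hx.2, rfl⟩
    · rintro ⟨hx, -, rfl⟩
      exact ⟨hx, rfl⟩

theorem mem_pcomp_pullbackFst {m a b k : ℕ} {h : Fin (2 ^ a) →. Fin (2 ^ m)}
    {g : Fin (2 ^ b) →. Fin (2 ^ m)} {f : Fin (2 ^ a) →. Fin (2 ^ k)} {x : Fin (2 ^ (m + (a + b)))}
    {y : Fin (2 ^ k)} :
    y ∈ pcomp (pullbackFst h g) f x ↔ x ∈ pullbackSet h g ∧ y ∈ f (pow2Equiv3 m a b x).2.1 := by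
  rw [pullbackFst, pcomp_assoc, mem_prestrict_pcomp, mem_pcomp]
  simp only [mem_pofFun, exists_eq_left]

theorem mem_pcomp_pullbackSnd {m a b k : ℕ} {h : Fin (2 ^ a) →. Fin (2 ^ m)}
    {g : Fin (2 ^ b) →. Fin (2 ^ m)} {f : Fin (2 ^ b) →. Fin (2 ^ k)} {x : Fin (2 ^ (m + (a + b)))}
    {y : Fin (2 ^ k)} :
    y ∈ pcomp (pullbackSnd h g) f x ↔ x ∈ pullbackSet h g ∧ y ∈ f (pow2Equiv3 m a b x).2.2 := by
  rw [pullbackSnd, pcomp_assoc, mem_prestrict_pcomp, mem_pcomp]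
  simp only [mem_pofFun, exists_eq_left]

section SpanComposite

variable {n m p a b : ℕ} {s : SpanRep (2 ^ n) (2 ^ m)} {t : SpanRep (2 ^ m) (2 ^ p)}
  {js : s.carrier → Fin (2 ^ a)} {jt : t.carrier → Fin (2 ^ b)}

/-- The apex of `s ⨾ t` sits inside the pullback of the legs `pfunOfSpan js s.right` and
`pfunOfSpan jt t.left`. -/
def pullbackEmbedding (js : s.carrier → Fin (2 ^ a)) (jt : t.carrier → Fin (2 ^ b)) :
    (spanRepComp s t).carrier → Fin (2 ^ (m + (a + b))) :=
  fun c => (pow2Equiv3 m a b).symm (s.right c.1.1, js c.1.1, jt c.1.2)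

theorem pullbackEmbedding_injective (hjs : js.Injective) (hjt : jt.Injective) :
    (pullbackEmbedding js jt).Injective := fun c c' hc => by
  simp only [pullbackEmbedding, Equiv.apply_eq_iff_eq, Prod.mk.injEq] at hc
  exact Subtype.ext (Prod.ext (hjs hc.2.1) (hjt hc.2.2))

theorem mem_pullbackSet_iff (hjs : js.Injective) (hjt : jt.Injective)
    {x : Fin (2 ^ (m + (a + b)))} :
    x ∈ pullbackSet (pfunOfSpan js s.right) (pfunOfSpan jt t.left) ↔
      ∃ c, pullbackEmbedding js jt c = x := by
  obtain ⟨⟨v, x₁, x₂⟩, rfl⟩ := (pow2Equiv3 m a b).symm.surjective x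
  simp only [pullbackSet, pullbackEmbedding, Set.mem_ofPred_eq, Equiv.apply_symm_apply,
    Equiv.apply_eq_iff_eq, Prod.mk.injEq, mem_pfunOfSpan hjs, mem_pfunOfSpan hjt]
  constructor
  · rintro ⟨⟨c, rfl, rfl⟩, ⟨c', rfl, hc'⟩⟩
    exact ⟨⟨(c, c'), hc'.symm⟩, rfl, rfl, rfl⟩
  · rintro ⟨⟨⟨c, c'⟩, hcc'⟩, rfl, rfl, rfl⟩
    exact ⟨⟨c, rfl, rfl⟩, ⟨c', rfl, hcc'.symm⟩⟩

theorem pcomp_pullbackFst_pfunOfSpan (hjs : js.Injective) (hjt : jt.Injective) :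
    pcomp (pullbackFst (pfunOfSpan js s.right) (pfunOfSpan jt t.left)) (pfunOfSpan js s.left) =
      pfunOfSpan (pullbackEmbedding js jt) (spanRepComp s t).left :=
  PFun.ext fun x y => by
    rw [mem_pcomp_pullbackFst, mem_pullbackSet_iff hjs hjt,
      mem_pfunOfSpan (pullbackEmbedding_injective hjs hjt)]
    constructor
    · rintro ⟨⟨c, rfl⟩, hy⟩
      simp only [pullbackEmbedding, Equiv.apply_symm_apply] at hy
      exact ⟨c, rfl, (mem_pfunOfSpan_apply hjs).mp hy⟩
    · rintro ⟨c, rfl, rfl⟩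
      refine ⟨⟨c, rfl⟩, ?_⟩
      simp only [pullbackEmbedding, Equiv.apply_symm_apply]
      exact (mem_pfunOfSpan_apply hjs).mpr rfl

theorem pcomp_pullbackSnd_pfunOfSpan (hjs : js.Injective) (hjt : jt.Injective) :
    pcomp (pullbackSnd (pfunOfSpan js s.right) (pfunOfSpan jt t.left)) (pfunOfSpan jt t.right) =
      pfunOfSpan (pullbackEmbedding js jt) (spanRepComp s t).right :=
  PFun.ext fun x y => by
    rw [mem_pcomp_pullbackSnd, mem_pullbackSet_iff hjs hjt,
      mem_pfunOfSpan (pullbackEmbedding_injective hjs hjt)]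
    constructor
    · rintro ⟨⟨c, rfl⟩, hy⟩
      simp only [pullbackEmbedding, Equiv.apply_symm_apply] at hy
      exact ⟨c, rfl, (mem_pfunOfSpan_apply hjt).mp hy⟩
    · rintro ⟨c, rfl, rfl⟩
      refine ⟨⟨c, rfl⟩, ?_⟩
      simp only [pullbackEmbedding, Equiv.apply_symm_apply]
      exact (mem_pfunOfSpan_apply hjt).mpr rfl

end SpanComposite

universe v

namespace IsPROPHom

variable {P : PROPCore.{w}} {Q : PROPCore.{v}} {Φ : ∀ a b : ℕ, P.Hom a b → Q.Hom a b}
  (hΦ : IsPROPHom P Q Φ)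
include hΦ

theorem map_id (n : ℕ) : Φ n n (P.id n) = Q.id n := hΦ.1 n

theorem map_comp {a b c : ℕ} (f : P.Hom a b) (g : P.Hom b c) :
    Φ a c (P.comp f g) = Q.comp (Φ a b f) (Φ b c g) :=
  hΦ.2.1 a b c f g

theorem map_tensor {a b c d : ℕ} (f : P.Hom a b) (g : P.Hom c d) :
    Φ (a + c) (b + d) (P.tensor f g) = Q.tensor (Φ a b f) (Φ c d g) :=
  hΦ.2.2.1 a b c d f g

theorem map_swap (a b : ℕ) : Φ (a + b) (b + a) (P.swap a b) = Q.swap a b := hΦ.2.2.2 a b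

end IsPROPHom

namespace PROP

variable (Q : PROP.{w})

theorem cast_comp_cast {a a' b b' c c' : ℕ} (ha : a = a') (hb : b = b') (hc : c = c')
    (f : Q.core.Hom a b) (g : Q.core.Hom b c) :
    Q.core.comp (Q.core.cast ha hb f) (Q.core.cast hb hc g) =
      Q.core.cast ha hc (Q.core.comp f g) := by
  subst ha hb hc
  rfl

theorem tensor_id_comp_tensor_id {a b c : ℕ} (m : ℕ) (f : Q.core.Hom a b) (g : Q.core.Hom b c) :
    Q.core.comp (Q.core.tensor (Q.core.id m) f) (Q.core.tensor (Q.core.id m) g) =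
      Q.core.tensor (Q.core.id m) (Q.core.comp f g) := by
  rw [← Q.laws.tensor_comp, Q.laws.id_comp]

/-- A morphism through the unit object `0` can be computed as a tensor product. -/
theorem comp_eq_tensor_swap_tensor {a b : ℕ} (φ : Q.core.Hom a 0) (ψ : Q.core.Hom 0 b) :
    Q.core.comp φ ψ = Q.core.comp (Q.core.tensor (Q.core.id a) ψ)
      (Q.core.comp (Q.core.swap a b) (Q.core.tensor (Q.core.id b) φ)) := by
  have hψφ : Q.core.tensor ψ φ =
      Q.core.comp (Q.core.tensor (Q.core.id 0) φ) (Q.core.tensor ψ (Q.core.id 0)) := by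
    rw [← Q.laws.tensor_comp, Q.laws.id_comp, Q.laws.comp_id]
  rw [← Q.laws.assoc, Q.laws.swap_natural, Q.laws.assoc, ← Q.laws.tensor_comp, Q.laws.comp_id,
    Q.laws.id_comp, hψφ, ← Q.laws.assoc, Q.laws.tensor_unit_right, Q.laws.swap_zero,
    Q.laws.tensor_unit_left, cast_comp_cast, Q.laws.id_comp]
  rfl

end PROP

section UniversalProperty

variable {Q : PROP.{w}} {F : ∀ a b : ℕ, FPar2opCore.Hom a b → Q.core.Hom a b}
  {G : ∀ a b : ℕ, FPar2Core.Hom a b → Q.core.Hom a b}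

local infixl:70 " ⨾ " => PROPCore.comp _

section Functoriality

variable (hF : IsPROPHom FPar2opCore Q.core F) (hG : IsPROPHom FPar2Core Q.core G)
include hF hG

omit hG in
theorem F_pcomp {a b c : ℕ} (f : Fin (2 ^ a) →. Fin (2 ^ b)) (g : Fin (2 ^ b) →. Fin (2 ^ c)) :
    F c a (pcomp f g) = F c b g ⨾ F b a f :=
  hF.map_comp g f

omit hG in
theorem F_pid (n : ℕ) : F n n (pid (Fin (2 ^ n))) = Q.core.id n := hF.map_id n

omit hF in
theorem G_pid (n : ℕ) : G n n (pid (Fin (2 ^ n))) = Q.core.id n := hG.map_id n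

omit hF in
theorem G_pcomp {a b c : ℕ} (f : Fin (2 ^ a) →. Fin (2 ^ b)) (g : Fin (2 ^ b) →. Fin (2 ^ c)) :
    G a c (pcomp f g) = G a b f ⨾ G b c g :=
  hG.map_comp f g

omit hG in
theorem F_parTensor {a b c d : ℕ} (f : Fin (2 ^ a) →. Fin (2 ^ b))
    (g : Fin (2 ^ c) →. Fin (2 ^ d)) :
    F (b + d) (a + c) (parTensor f g) = Q.core.tensor (F b a f) (F d c g) :=
  hF.map_tensor f g

omit hF in
theorem G_parTensor {a b c d : ℕ} (f : Fin (2 ^ a) →. Fin (2 ^ b))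
    (g : Fin (2 ^ c) →. Fin (2 ^ d)) :
    G (a + c) (b + d) (parTensor f g) = Q.core.tensor (G a b f) (G c d g) :=
  hG.map_tensor f g

omit hG in
theorem F_pproj (m d : ℕ) :
    F m (m + d) (pproj m d) = Q.core.tensor (Q.core.id m) (F 0 d (pdel d)) := by
  rw [← F_pid hF]
  exact F_parTensor hF (pid _) (pdel d)

omit hF in
theorem G_pproj (m d : ℕ) :
    G (m + d) m (pproj m d) = Q.core.tensor (Q.core.id m) (G d 0 (pdel d)) := by
  rw [← G_pid hG]
  exact G_parTensor hG (pid _) (pdel d)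

theorem G_pdel_comp_F_pdel (a b : ℕ) :
    G a 0 (pdel a) ⨾ F 0 b (pdel b) = F a (a + b) (pproj a b) ⨾ G (a + b) b (pprojRight a b) := by
  rw [F_pproj hF, pprojRight, G_pcomp hG, G_pproj hG]
  rw [show G (a + b) (b + a) (pofFun (swapEquiv a b)) = Q.core.swap a b from hG.map_swap a b]
  exact Q.comp_eq_tensor_swap_tensor _ _

theorem G_pproj_comp_F_pproj (m a b : ℕ) :
    G (m + a) m (pproj m a) ⨾ F m (m + b) (pproj m b) =
      F (m + a) (m + (a + b)) (pdropThird m a b) ⨾ G (m + (a + b)) (m + b) (pdropSecond m a b) := by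
  have hW : F (m + a) (m + (a + b)) (pdropThird m a b) =
      Q.core.tensor (Q.core.id m) (F a (a + b) (pproj a b)) := by
    rw [← F_pid hF]
    exact F_parTensor hF _ _
  have hZ : G (m + (a + b)) (m + b) (pdropSecond m a b) =
      Q.core.tensor (Q.core.id m) (G (a + b) b (pprojRight a b)) := by
    rw [← G_pid hG]
    exact G_parTensor hG _ _
  rw [G_pproj hG, F_pproj hF, hW, hZ, Q.tensor_id_comp_tensor_id, Q.tensor_id_comp_tensor_id,
    G_pdel_comp_F_pdel hF hG]

end Functoriality

section Square

variable (hsq : ∀ (a b : ℕ) (f : FPinj2Core.Hom a b), F a b (jopmap a b f) = G a b (jmap a b f))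
include hsq

theorem F_pinv_eq_G {a b : ℕ} {u : Fin (2 ^ a) →. Fin (2 ^ b)} (hu : IsPInj u) :
    F a b (pinv u) = G a b u :=
  hsq a b ⟨u, hu⟩

theorem F_eq_G_pinv {a b : ℕ} {u : Fin (2 ^ b) →. Fin (2 ^ a)} (hu : IsPInj u) :
    F a b u = G a b (pinv u) := by
  rw [← F_pinv_eq_G hsq (isPInj_pinv u), pinv_pinv hu]

theorem F_prestrict_eq_G {d : ℕ} (D : Set (Fin (2 ^ d))) :
    F d d (prestrict D) = G d d (prestrict D) := by
  rw [← F_pinv_eq_G hsq (isPInj_prestrict D), pinv_prestrict]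

variable (hF : IsPROPHom FPar2opCore Q.core F) (hG : IsPROPHom FPar2Core Q.core G)
include hF hG

theorem F_comp_G_eq_restrict {n m d : ℕ} (P : Fin (2 ^ d) →. Fin (2 ^ n))
    (R : Fin (2 ^ d) →. Fin (2 ^ m)) :
    F n d P ⨾ G d m R =
      F n d (pcomp (prestrict (P.Dom ∩ R.Dom)) P) ⨾
        G d m (pcomp (prestrict (P.Dom ∩ R.Dom)) R) := by
  have hR : pcomp (prestrict P.Dom) R =
      pcomp (prestrict (P.Dom ∩ R.Dom)) (pcomp (prestrict (P.Dom ∩ R.Dom)) R) :=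
    PFun.ext fun x y => by
      simp only [mem_prestrict_pcomp, Set.mem_inter_iff, PFun.mem_dom]
      exact ⟨fun ⟨hP, hy⟩ => ⟨⟨hP, _, hy⟩, ⟨hP, _, hy⟩, hy⟩, fun ⟨_, ⟨hP, _⟩, hy⟩ => ⟨hP, hy⟩⟩
  calc F n d P ⨾ G d m R
      = F n d (pcomp (prestrict P.Dom) P) ⨾ G d m R := by rw [prestrict_dom_pcomp]
    _ = F n d P ⨾
          G d m (pcomp (prestrict (P.Dom ∩ R.Dom)) (pcomp (prestrict (P.Dom ∩ R.Dom)) R)) := by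
        rw [F_pcomp hF, F_prestrict_eq_G hsq, Q.laws.assoc, ← G_pcomp hG, hR]
    _ = _ := by rw [G_pcomp hG, ← F_prestrict_eq_G hsq, ← Q.laws.assoc, ← F_pcomp hF]

theorem F_comp_G_pfunOfSpan_eq {n m d d' : ℕ} {C : Type} (l : C → Fin (2 ^ n))
    (r : C → Fin (2 ^ m)) {j : C → Fin (2 ^ d)} {j' : C → Fin (2 ^ d')}
    (hj : j.Injective) (hj' : j'.Injective) :
    F n d (pfunOfSpan j l) ⨾ G d m (pfunOfSpan j r) =
      F n d' (pfunOfSpan j' l) ⨾ G d' m (pfunOfSpan j' r) := by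
  have hu : IsPInj (pfunOfSpan j j') := isPInj_pfunOfSpan hj'
  have hl : pfunOfSpan j l = pcomp (pfunOfSpan j j') (pfunOfSpan j' l) :=
    (pfunOfSpan_pcomp_pfunOfSpan id l hj hj').symm
  have hback : pcomp (pinv (pfunOfSpan j j')) (pfunOfSpan j r) = pfunOfSpan j' r := by
    rw [pinv_pfunOfSpan hj hj']
    exact pfunOfSpan_pcomp_pfunOfSpan id r hj' hj
  calc F n d (pfunOfSpan j l) ⨾ G d m (pfunOfSpan j r)
      = F n d' (pfunOfSpan j' l) ⨾ (G d' d (pinv (pfunOfSpan j j')) ⨾ G d m (pfunOfSpan j r)) := by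
        rw [hl, F_pcomp hF, F_eq_G_pinv hsq hu, Q.laws.assoc]
    _ = F n d' (pfunOfSpan j' l) ⨾ G d' m (pfunOfSpan j' r) := by rw [← G_pcomp hG, hback]

theorem F_comp_G_eq_of_spanEqv {n m d d' : ℕ} {s s' : SpanRep (2 ^ n) (2 ^ m)} (h : spanEqv s s')
    {j : s.carrier → Fin (2 ^ d)} {j' : s'.carrier → Fin (2 ^ d')} (hj : j.Injective)
    (hj' : j'.Injective) :
    F n d (pfunOfSpan j s.left) ⨾ G d m (pfunOfSpan j s.right) =
      F n d' (pfunOfSpan j' s'.left) ⨾ G d' m (pfunOfSpan j' s'.right) := by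
  obtain ⟨e, hl, hr⟩ := h
  rw [← pfunOfSpan_comp_equiv e hj', ← pfunOfSpan_comp_equiv e hj' s'.right,
    show s'.left ∘ e = s.left from funext hl, show s'.right ∘ e = s.right from funext hr]
  exact F_comp_G_pfunOfSpan_eq hsq hF hG s.left s.right hj (hj'.comp e.injective)

theorem G_comp_F_eq_pgraph {m a b : ℕ} (h : Fin (2 ^ a) →. Fin (2 ^ m))
    (g : Fin (2 ^ b) →. Fin (2 ^ m)) :
    G a m h ⨾ F m b g =
      F a (m + (a + b)) (pcomp (pdropThird m a b) (pinv (pgraph h))) ⨾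
        G (m + (a + b)) b (pcomp (pdropSecond m a b) (pinv (pgraph g))) := by
  calc G a m h ⨾ F m b g
      = F a (m + a) (pinv (pgraph h)) ⨾ ((G (m + a) m (pproj m a) ⨾ F m (m + b) (pproj m b)) ⨾
          G (m + b) b (pinv (pgraph g))) := by
        conv_lhs => rw [← pgraph_pcomp_pproj h, ← pgraph_pcomp_pproj g]
        rw [G_pcomp hG, F_pcomp hF, ← F_pinv_eq_G hsq (isPInj_pgraph h),
          F_eq_G_pinv hsq (isPInj_pgraph g)]
        simp only [Q.laws.assoc]
    _ = _ := by
        rw [G_pproj_comp_F_pproj hF hG, F_pcomp hF, G_pcomp hG]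
        simp only [Q.laws.assoc]

/-- The Beck–Chevalley condition. -/
theorem G_comp_F_eq_pullback {m a b : ℕ} (h : Fin (2 ^ a) →. Fin (2 ^ m))
    (g : Fin (2 ^ b) →. Fin (2 ^ m)) :
    G a m h ⨾ F m b g =
      F a (m + (a + b)) (pullbackFst h g) ⨾ G (m + (a + b)) b (pullbackSnd h g) := by
  rw [G_comp_F_eq_pgraph hsq hF hG, F_comp_G_eq_restrict hsq hF hG, pullbackFst_eq_prestrict,
    pullbackSnd_eq_prestrict]

end Square

noncomputable def SpanRep.apexEmbedding {n m : ℕ} (s : SpanRep n m) :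
    s.carrier → Fin (2 ^ Fintype.card s.carrier) :=
  fun c => Fin.castLE Nat.lt_two_pow_self.le (Fintype.equivFin s.carrier c)

theorem SpanRep.apexEmbedding_injective {n m : ℕ} (s : SpanRep n m) : s.apexEmbedding.Injective :=
  (Fin.castLE_injective _).comp (Fintype.equivFin s.carrier).injective

noncomputable def pushoutLift (hF : IsPROPHom FPar2opCore Q.core F)
    (hG : IsPROPHom FPar2Core Q.core G)
    (hsq : ∀ (a b : ℕ) (f : FPinj2Core.Hom a b), F a b (jopmap a b f) = G a b (jmap a b f))
    (a b : ℕ) : FSpan2Core.Hom a b → Q.core.Hom a b :=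
  Quot.lift
    (fun s => F a _ (pfunOfSpan s.apexEmbedding s.left) ⨾ G _ b (pfunOfSpan s.apexEmbedding s.right))
    fun _ _ h => F_comp_G_eq_of_spanEqv hsq hF hG h (SpanRep.apexEmbedding_injective _)
      (SpanRep.apexEmbedding_injective _)

section Lift

variable (hF : IsPROPHom FPar2opCore Q.core F) (hG : IsPROPHom FPar2Core Q.core G)
  (hsq : ∀ (a b : ℕ) (f : FPinj2Core.Hom a b), F a b (jopmap a b f) = G a b (jmap a b f))

theorem pushoutLift_sMk {n m d : ℕ} (s : SpanRep (2 ^ n) (2 ^ m)) {j : s.carrier → Fin (2 ^ d)}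
    (hj : j.Injective) :
    pushoutLift hF hG hsq n m (sMk s) =
      F n d (pfunOfSpan j s.left) ⨾ G d m (pfunOfSpan j s.right) :=
  F_comp_G_eq_of_spanEqv hsq hF hG (spanEqv.refl s) s.apexEmbedding_injective hj

theorem pushoutLift_Pmap {a b : ℕ} (f : Fin (2 ^ a) →. Fin (2 ^ b)) :
    pushoutLift hF hG hsq a b (Pmap a b f) = G a b f := by
  change pushoutLift hF hG hsq a b (sMk (parToSpan f)) = _
  rw [pushoutLift_sMk hF hG hsq _ (parToSpan_left_injective f), pfunOfSpan_parToSpan_left,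
    pfunOfSpan_parToSpan_right, F_prestrict_eq_G hsq, ← G_pcomp hG, prestrict_dom_pcomp]

theorem pushoutLift_Popmap {a b : ℕ} (f : Fin (2 ^ b) →. Fin (2 ^ a)) :
    pushoutLift hF hG hsq a b (Popmap a b f) = F a b f := by
  change pushoutLift hF hG hsq a b (sMk (spanRev (parToSpan f))) = _
  rw [pushoutLift_sMk hF hG hsq (spanRev (parToSpan f)) (parToSpan_left_injective f)]
  dsimp only [spanRev]
  rw [pfunOfSpan_parToSpan_left, pfunOfSpan_parToSpan_right, ← F_prestrict_eq_G hsq,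
    ← F_pcomp hF, prestrict_dom_pcomp]

theorem pushoutLift_id (n : ℕ) : pushoutLift hF hG hsq n n (FSpan2Core.id n) = Q.core.id n := by
  change pushoutLift hF hG hsq n n (sMk (spanRepId (2 ^ n))) = _
  rw [pushoutLift_sMk hF hG hsq _ Function.injective_id]
  dsimp only [spanRepId]
  rw [pfunOfSpan_id, pofFun_id, F_pid hF, G_pid hG, Q.laws.id_comp]

theorem pushoutLift_swap (a b : ℕ) :
    pushoutLift hF hG hsq (a + b) (b + a) (FSpan2Core.swap a b) = Q.core.swap a b := by
  change pushoutLift hF hG hsq _ _ (sMk { carrier := _, left := id, right := swapEquiv a b }) = _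
  rw [pushoutLift_sMk hF hG hsq _ Function.injective_id]
  dsimp only
  rw [pfunOfSpan_id, pfunOfSpan_id, pofFun_id, F_pid hF, Q.laws.id_comp]
  exact hG.map_swap a b

theorem pushoutLift_tensor {a b c d : ℕ} (σ : FSpan2Core.Hom a b) (τ : FSpan2Core.Hom c d) :
    pushoutLift hF hG hsq (a + c) (b + d) (FSpan2Core.tensor σ τ) =
      Q.core.tensor (pushoutLift hF hG hsq a b σ) (pushoutLift hF hG hsq c d τ) := by
  induction σ using Quot.ind with | _ s => ?_
  induction τ using Quot.ind with | _ t => ?_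
  have hs := s.apexEmbedding_injective
  have ht := t.apexEmbedding_injective
  change pushoutLift hF hG hsq _ _ (sMk (spanRepTensor2 s t)) =
    Q.core.tensor (pushoutLift hF hG hsq a b (sMk s)) (pushoutLift hF hG hsq c d (sMk t))
  rw [pushoutLift_sMk hF hG hsq _
      (j := fun p : s.carrier × t.carrier =>
        (pow2Equiv _ _).symm (s.apexEmbedding p.1, t.apexEmbedding p.2))
      ((pow2Equiv _ _).symm.injective.comp (hs.prodMap ht)),
    pushoutLift_sMk hF hG hsq s hs, pushoutLift_sMk hF hG hsq t ht]
  dsimp only [spanRepTensor2]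
  rw [← parTensor_pfunOfSpan hs ht, ← parTensor_pfunOfSpan hs ht, F_parTensor hF, G_parTensor hG,
    Q.laws.tensor_comp]

theorem pushoutLift_comp {n m p : ℕ} (σ : FSpan2Core.Hom n m) (τ : FSpan2Core.Hom m p) :
    pushoutLift hF hG hsq n p (FSpan2Core.comp σ τ) =
      pushoutLift hF hG hsq n m σ ⨾ pushoutLift hF hG hsq m p τ := by
  induction σ using Quot.ind with | _ s => ?_
  induction τ using Quot.ind with | _ t => ?_
  have hs := s.apexEmbedding_injective
  have ht := t.apexEmbedding_injective
  change pushoutLift hF hG hsq _ _ (sMk (spanRepComp s t)) =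
    pushoutLift hF hG hsq n m (sMk s) ⨾ pushoutLift hF hG hsq m p (sMk t)
  rw [pushoutLift_sMk hF hG hsq _ (pullbackEmbedding_injective hs ht),
    pushoutLift_sMk hF hG hsq s hs, pushoutLift_sMk hF hG hsq t ht,
    ← pcomp_pullbackFst_pfunOfSpan hs ht, ← pcomp_pullbackSnd_pfunOfSpan hs ht, F_pcomp hF,
    G_pcomp hG]
  simp only [Q.laws.assoc]
  rw [← Q.laws.assoc (G _ m (pfunOfSpan s.apexEmbedding s.right)), G_comp_F_eq_pullback hsq hF hG,
    Q.laws.assoc]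

theorem pushoutLift_isPROPHom : IsPROPHom FSpan2Core Q.core (pushoutLift hF hG hsq) :=
  ⟨pushoutLift_id hF hG hsq, fun _ _ _ => pushoutLift_comp hF hG hsq,
    fun _ _ _ _ => pushoutLift_tensor hF hG hsq, pushoutLift_swap hF hG hsq⟩

theorem eq_pushoutLift {H : ∀ a b : ℕ, FSpan2Core.Hom a b → Q.core.Hom a b}
    (hH : IsPROPHom FSpan2Core Q.core H)
    (hHF : ∀ (a b : ℕ) (f : FPar2opCore.Hom a b), H a b (Popmap a b f) = F a b f)
    (hHG : ∀ (a b : ℕ) (f : FPar2Core.Hom a b), H a b (Pmap a b f) = G a b f) :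
    H = pushoutLift hF hG hsq := by
  funext a b σ
  induction σ using Quot.ind with | _ s => ?_
  have hs := s.apexEmbedding_injective
  have hσ : sMk s = FSpan2Core.comp (Popmap a _ (pfunOfSpan s.apexEmbedding s.left))
      (Pmap _ b (pfunOfSpan s.apexEmbedding s.right)) :=
    Quot.sound (spanEqv_spanRepComp_pfunOfSpan s hs)
  change H a b (sMk s) = pushoutLift hF hG hsq a b (sMk s)
  rw [pushoutLift_sMk hF hG hsq s hs, hσ, hH.map_comp]
  exact congrArg₂ _ (hHF _ _ _) (hHG _ _ _)

end Lift

end UniversalProperty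

/-- with `j : FPinj₂ → FPar₂` the inclusion,
`j° : FPinj₂ → FPar₂^op` the partial-inverse map, and `P : FPar₂ → FSpan₂`,
`P° : FPar₂^op → FSpan₂` sending a partial function to (the class of) its
span of definition, resp. the reversed such span: `P` and `P°` are prop
morphisms, the square commutes (`j°;P° = j;P`), and the square is a pushout
in the category of props: for every prop `Q` and prop morphisms
`F : FPar₂^op → Q`, `G : FPar₂ → Q` with `j°;F = j;G` there is a unique prop
morphism `H : FSpan₂ → Q` with `P°;H = F` and `P;H = G`. -/
theorem fspan_pushout :
    IsPROPHom FPinj2Core FPar2Core jmap ∧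
    IsPROPHom FPinj2Core FPar2opCore jopmap ∧
    IsPROPHom FPar2Core FSpan2Core Pmap ∧
    IsPROPHom FPar2opCore FSpan2Core Popmap ∧
    (∀ (a b : ℕ) (f : FPinj2Core.Hom a b), Popmap a b (jopmap a b f) = Pmap a b (jmap a b f)) ∧
    (∀ (Q : PROP.{w}) (F : ∀ a b : ℕ, FPar2opCore.Hom a b → Q.core.Hom a b)
        (G : ∀ a b : ℕ, FPar2Core.Hom a b → Q.core.Hom a b),
      IsPROPHom FPar2opCore Q.core F → IsPROPHom FPar2Core Q.core G →
      (∀ (a b : ℕ) (f : FPinj2Core.Hom a b), F a b (jopmap a b f) = G a b (jmap a b f)) →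
      ∃! H : ∀ a b : ℕ, FSpan2Core.Hom a b → Q.core.Hom a b,
        IsPROPHom FSpan2Core Q.core H ∧
        (∀ (a b : ℕ) (f : FPar2opCore.Hom a b), H a b (Popmap a b f) = F a b f) ∧
        (∀ (a b : ℕ) (f : FPar2Core.Hom a b), H a b (Pmap a b f) = G a b f)) := by
  refine ⟨jmap_isPROPHom, jopmap_isPROPHom, Pmap_isPROPHom, Popmap_isPROPHom, Popmap_jopmap,
    fun Q F G hF hG hsq => ⟨pushoutLift hF hG hsq, ?_, ?_⟩⟩
  · exact ⟨pushoutLift_isPROPHom hF hG hsq, fun _ _ f => pushoutLift_Popmap hF hG hsq f,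
      fun _ _ f => pushoutLift_Pmap hF hG hsq f⟩
  · exact fun H ⟨hH, hHF, hHG⟩ => eq_pushoutLift hF hG hsq hH hHF hHG
end

section
/- Let Span_fin be the monoidal category whose objects are natural numbers, whose morphisms n → m are isomorphism classes of spans Fin n ← γ → Fin m with γ a finite type (two spans identified when a bijection of apices commutes with both legs), with composition by pullback, identities the identity spans, tensor n ⊗ m := n·m on objects, and tensor of morphisms the cartesian product of spans transported along the bijections Fin(n·m) ≅ Fin n × Fin m. Let Mat_ℕ be the monoidal category whose objects are natural numbers, whose morphisms n → m are the matrices over ℕ indexed by Fin n × Fin m, with composition matrix multiplication, tensor n ⊗ m := n·m on objects, and tensor of morphisms the Kronecker product. Then the assignment sending the class of a span (f : γ → Fin n, g : γ → Fin m) to its counting matrix (with (i, j) entry the cardinality of {c : γ | f(c) = i ∧ g(c) = j}) is well defined and is a monoidal equivalence — indeed an identity-on-objects isomorphism of monoidal categories — from Span_fin to Mat_ℕ. -/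
/-- The tensor (cartesian product) of spans, on objects `n ⊗ m = n * m`,
transported along `Fin n × Fin n' ≃ Fin (n * n')`. -/
def spanRepMul {n m n' m' : ℕ} (s : SpanRep n m) (t : SpanRep n' m') :
    SpanRep (n * n') (m * m') where
  carrier := s.carrier × t.carrier
  left p := finProdFinEquiv (s.left p.1, t.left p.2)
  right p := finProdFinEquiv (s.right p.1, t.right p.2)

theorem spanEqv_mul_left {n m n' m' : ℕ} {s s' : SpanRep n m} (t : SpanRep n' m')
    (h : spanEqv s s') : spanEqv (spanRepMul s t) (spanRepMul s' t) := by
  obtain ⟨e, hl, hr⟩ := h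
  refine ⟨e.prodCongr (Equiv.refl t.carrier), fun p => ?_, fun p => ?_⟩
  · show finProdFinEquiv (s'.left (e p.1), t.left p.2) = _
    rw [hl p.1]; rfl
  · show finProdFinEquiv (s'.right (e p.1), t.right p.2) = _
    rw [hr p.1]; rfl

theorem spanEqv_mul_right {n m n' m' : ℕ} (s : SpanRep n m) {t t' : SpanRep n' m'}
    (h : spanEqv t t') : spanEqv (spanRepMul s t) (spanRepMul s t') := by
  obtain ⟨e, hl, hr⟩ := h
  refine ⟨(Equiv.refl s.carrier).prodCongr e, fun p => ?_, fun p => ?_⟩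
  · show finProdFinEquiv (s.left p.1, t'.left (e p.2)) = _
    rw [hl p.2]; rfl
  · show finProdFinEquiv (s.right p.1, t'.right (e p.2)) = _
    rw [hr p.2]; rfl

/-- The tensor descends to isomorphism classes of spans. -/
def spanMul {n m n' m' : ℕ} : SpanHom n m → SpanHom n' m' → SpanHom (n * n') (m * m') :=
  Quot.lift₂ (fun s t => sMk (spanRepMul s t))
    (fun s _ _ h => Quot.sound (spanEqv_mul_right s h))
    (fun _ _ t h => Quot.sound (spanEqv_mul_left t h))

/-- The counting matrix of a span. -/
noncomputable def countMatrix {n m : ℕ} (s : SpanRep n m) : Matrix (Fin n) (Fin m) ℕ :=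
  Matrix.of fun i j => Nat.card {c : s.carrier // s.left c = i ∧ s.right c = j}

/-!
Isomorphic spans have the same fibre cardinalities, so the counting matrix descends to
classes of spans. The fibre of a pullback over `(i, l)` is the disjoint union over the middle
index `j` of products of fibres, which is the formula for the matrix product; the fibres of a
product span are products of fibres, which is the Kronecker product. Conversely a span is
determined up to isomorphism by its fibres over `Fin n × Fin m`, hence by their cardinalities,
and every matrix `M` is the counting matrix of the span with `M i j` points over `(i, j)`.
-/

theorem countMatrix_eq_of_spanEqv {n m : ℕ} {s t : SpanRep n m} (h : spanEqv s t) :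
    countMatrix s = countMatrix t := by
  obtain ⟨e, hl, hr⟩ := h
  ext i j
  exact Nat.card_congr (e.subtypeEquiv fun c => by rw [hl, hr])

theorem countMatrix_spanRepId (n : ℕ) : countMatrix (spanRepId n) = 1 := by
  ext i j
  show Nat.card {c : Fin n // c = i ∧ c = j} = _
  rcases eq_or_ne i j with rfl | hij
  · simp [Matrix.one_apply_eq]
  · have : IsEmpty {c : Fin n // c = i ∧ c = j} := ⟨fun c => hij (c.2.1.symm.trans c.2.2)⟩
    rw [Matrix.one_apply_ne hij, Nat.card_of_isEmpty]

def spanRepCompFiberEquiv {n m k : ℕ} (s : SpanRep n m) (t : SpanRep m k)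
    (i : Fin n) (l : Fin k) :
    {q : (spanRepComp s t).carrier //
        (spanRepComp s t).left q = i ∧ (spanRepComp s t).right q = l} ≃
      Σ j : Fin m, {c : s.carrier // s.left c = i ∧ s.right c = j} ×
        {c : t.carrier // t.left c = j ∧ t.right c = l} where
  toFun q := ⟨s.right q.1.1.1, ⟨q.1.1.1, q.2.1, rfl⟩, ⟨q.1.1.2, q.1.2.symm, q.2.2⟩⟩
  invFun x := ⟨⟨(x.2.1.1, x.2.2.1), x.2.1.2.2.trans x.2.2.2.1.symm⟩, x.2.1.2.1, x.2.2.2.2⟩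
  left_inv _ := rfl
  right_inv := by rintro ⟨j, ⟨c, hc, rfl⟩, _⟩; rfl

theorem countMatrix_spanRepComp {n m k : ℕ} (s : SpanRep n m) (t : SpanRep m k) :
    countMatrix (spanRepComp s t) = countMatrix s * countMatrix t := by
  ext i l
  simp only [countMatrix, Matrix.mul_apply, Matrix.of_apply]
  rw [Nat.card_congr (spanRepCompFiberEquiv s t i l), Nat.card_sigma]
  simp only [Nat.card_prod]

theorem countMatrix_spanRepMul {n m n' m' : ℕ} (s : SpanRep n m) (t : SpanRep n' m') :
    countMatrix (spanRepMul s t) =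
      Matrix.reindex finProdFinEquiv finProdFinEquiv
        (Matrix.kroneckerMap (· * ·) (countMatrix s) (countMatrix t)) := by
  ext a b
  simp only [countMatrix, Matrix.reindex_apply, Matrix.submatrix_apply,
    Matrix.kroneckerMap_apply, Matrix.of_apply, ← Nat.card_prod]
  refine Nat.card_congr ((Equiv.subtypeEquivRight fun p => ?_).trans
    Equiv.subtypeProdEquivProd)
  show (finProdFinEquiv (s.left p.1, t.left p.2) = a ∧
      finProdFinEquiv (s.right p.1, t.right p.2) = b) ↔ _
  simp only [← Equiv.eq_symm_apply, Prod.ext_iff]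
  tauto

noncomputable def spanRepOfMatrix {n m : ℕ} (M : Matrix (Fin n) (Fin m) ℕ) : SpanRep n m where
  carrier := Σ p : Fin n × Fin m, Fin (M p.1 p.2)
  left x := x.1.1
  right x := x.1.2

theorem countMatrix_spanRepOfMatrix {n m : ℕ} (M : Matrix (Fin n) (Fin m) ℕ) :
    countMatrix (spanRepOfMatrix M) = M := by
  ext i j
  refine Nat.card_eq_of_equiv_fin ((Equiv.subtypeEquivRight fun x => ?_).trans
    (Equiv.sigmaSubtype (β := fun p : Fin n × Fin m => Fin (M p.1 p.2)) (i, j)))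
  exact (Prod.ext_iff (x := x.1) (y := (i, j))).symm

theorem spanEqv_spanRepOfMatrix_countMatrix {n m : ℕ} (s : SpanRep n m) :
    spanEqv s (spanRepOfMatrix (countMatrix s)) := by
  classical
  refine ⟨(Equiv.sigmaFiberEquiv fun c => (s.left c, s.right c)).symm.trans
    (Equiv.sigmaCongrRight fun p => ?_), fun _ => rfl, fun _ => rfl⟩
  refine (Equiv.subtypeEquivRight fun c => Prod.ext_iff).trans (Fintype.equivFinOfCardEq ?_)
  rw [← Nat.card_eq_fintype_card]
  rfl

namespace SpanHom

noncomputable def toMatrix {n m : ℕ} : SpanHom n m → Matrix (Fin n) (Fin m) ℕ :=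
  Quot.lift countMatrix fun _ _ => countMatrix_eq_of_spanEqv

theorem toMatrix_sMk {n m : ℕ} (s : SpanRep n m) : (sMk s).toMatrix = countMatrix s := rfl

theorem toMatrix_spanComp {n m k : ℕ} (F : SpanHom n m) (G : SpanHom m k) :
    (spanComp F G).toMatrix = F.toMatrix * G.toMatrix := by
  induction F using Quot.ind
  induction G using Quot.ind
  exact countMatrix_spanRepComp _ _

theorem toMatrix_spanMul {n m n' m' : ℕ} (F : SpanHom n m) (G : SpanHom n' m') :
    (spanMul F G).toMatrix = Matrix.reindex finProdFinEquiv finProdFinEquiv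
      (Matrix.kroneckerMap (· * ·) F.toMatrix G.toMatrix) := by
  induction F using Quot.ind
  induction G using Quot.ind
  exact countMatrix_spanRepMul _ _

theorem sMk_spanRepOfMatrix_toMatrix {n m : ℕ} (F : SpanHom n m) :
    sMk (spanRepOfMatrix F.toMatrix) = F := by
  induction F using Quot.ind with
  | mk s => exact (Quot.sound (spanEqv_spanRepOfMatrix_countMatrix s)).symm

theorem toMatrix_bijective (n m : ℕ) : Function.Bijective (@toMatrix n m) :=
  Function.bijective_iff_has_inverse.mpr
    ⟨fun M => sMk (spanRepOfMatrix M), sMk_spanRepOfMatrix_toMatrix, countMatrix_spanRepOfMatrix⟩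

end SpanHom

/-- sending the class of a span to its counting matrix is a
well-defined, identity-on-objects monoidal isomorphism (in particular a
monoidal equivalence) from the monoidal category of isomorphism classes of
spans of finite types between the `Fin n` (composition by pullback, tensor
the cartesian product over `n ⊗ m = n·m`) to the monoidal category of
ℕ-matrices (composition matrix multiplication, tensor the Kronecker
product). -/
theorem span_fin_iso_mat_nat :
    ∃ Φ : ∀ n m : ℕ, SpanHom n m → Matrix (Fin n) (Fin m) ℕ,
      -- Φ is well defined and computed by the counting matrix
      (∀ (n m : ℕ) (s : SpanRep n m), Φ n m (sMk s) = countMatrix s) ∧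
      -- Φ is an (identity-on-objects) functor
      (∀ n : ℕ, Φ n n (sMk (spanRepId n)) = 1) ∧
      (∀ (n m k : ℕ) (F : SpanHom n m) (G : SpanHom m k),
        Φ n k (spanComp F G) = Φ n m F * Φ m k G) ∧
      -- Φ is monoidal: pullback tensor goes to the Kronecker product
      (∀ (n m n' m' : ℕ) (F : SpanHom n m) (G : SpanHom n' m'),
        Φ (n * n') (m * m') (spanMul F G) =
          Matrix.reindex finProdFinEquiv finProdFinEquiv
            (Matrix.kroneckerMap (· * ·) (Φ n m F) (Φ n' m' G))) ∧
      -- Φ is an isomorphism on each hom-set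
      (∀ n m : ℕ, Function.Bijective (Φ n m)) :=
  ⟨fun _ _ => SpanHom.toMatrix, fun _ _ => SpanHom.toMatrix_sMk, countMatrix_spanRepId,
    fun _ _ _ => SpanHom.toMatrix_spanComp, fun _ _ _ _ => SpanHom.toMatrix_spanMul,
    SpanHom.toMatrix_bijective⟩
end
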